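/- arXiv:2309.13239 — 8 statements merged into one kernel-verified Lean document; each statement's English description precedes it below -/
import Mathlib

section
/- For every integer M ≥ 1 and all real numbers 0 = k_0 < k_1 < ⋯ < k_M, one has Σ_{j=1}^{M} (√k_j − √k_{j−1})² / (k_j − k_{j−1}) ≤ 1 + Σ_{j=1}^{M−1} (k_{j+1} − k_j)/(4 k_j). -/
open Finset Real

theorem Finset.sum_Icc_one_succ_eq_add_sum_shift {M : Type*} [AddCommMonoid M] (f : ℕ → M)
    (N : ℕ) : ∑ j ∈ Icc 1 (N + 1), f j = f 1 + ∑ j ∈ Icc 1 N, f (j + 1) := by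
  induction N with
  | zero => simp
  | succ N ih => rw [sum_Icc_succ_top (by omega), ih, sum_Icc_succ_top (by omega), add_assoc]

/-- With `s = √a` and `t = √b`, the left side is `(t - s) / (t + s)` and the difference of the
two sides is `(t - s)² (t + 3s) / (4 s² (t + s)) ≥ 0`; this is the concavity of `√` at `a`. -/
theorem Real.sqrt_sub_sqrt_sq_div_sub_le {a b : ℝ} (ha : 0 < a) (hb : 0 ≤ b) :
    (√b - √a) ^ 2 / (b - a) ≤ (b - a) / (4 * a) := by
  obtain ⟨s, hs, rfl⟩ : ∃ s, 0 < s ∧ s ^ 2 = a := ⟨√a, sqrt_pos.2 ha, sq_sqrt ha.le⟩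
  obtain ⟨t, ht, rfl⟩ : ∃ t, 0 ≤ t ∧ t ^ 2 = b := ⟨√b, sqrt_nonneg b, sq_sqrt hb⟩
  rw [sqrt_sq hs.le, sqrt_sq ht]
  rcases eq_or_ne t s with rfl | hts
  · simp
  have hsq : t ^ 2 - s ^ 2 = (t - s) * (t + s) := by ring
  have hts' : t - s ≠ 0 := sub_ne_zero.2 hts
  have hsum : 0 < t + s := by positivity
  rw [hsq, sq, mul_div_mul_left _ _ hts', div_le_div_iff₀ hsum (by positivity)]
  nlinarith [mul_nonneg (sq_nonneg (t - s)) (by positivity : 0 ≤ t + 3 * s)]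

theorem stmt_0_general (M : ℕ) (k : ℕ → ℝ) (hk0 : k 0 = 0)
    (hmono : ∀ j, 1 ≤ j → j ≤ M → k (j - 1) < k j) :
    ∑ j ∈ Finset.Icc 1 M,
        (Real.sqrt (k j) - Real.sqrt (k (j - 1))) ^ 2 / (k j - k (j - 1))
      ≤ 1 + ∑ j ∈ Finset.Icc 1 (M - 1), (k (j + 1) - k j) / (4 * k j) := by
  obtain _ | N := M
  · simp
  have hstrict : StrictMonoOn k (Set.Iic (N + 1)) :=
    strictMonoOn_Iic_of_lt_succ fun m hm ↦ by
      simpa using hmono (m + 1) (by omega) (by omega)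
  have hpos : ∀ j, 1 ≤ j → j ≤ N + 1 → 0 < k j := fun j h1 h2 ↦
    hk0 ▸ hstrict (Set.mem_Iic.2 (Nat.zero_le _)) (Set.mem_Iic.2 h2) (by omega)
  rw [sum_Icc_one_succ_eq_add_sum_shift]
  simp only [Nat.add_sub_cancel]
  gcongr ?_ + ∑ j ∈ _, ?_ with j hj
  · rw [hk0, sqrt_zero, sub_zero, sub_zero, sq_sqrt (hpos 1 le_rfl (by omega)).le]
    exact div_self_le_one _
  · rw [mem_Icc] at hj
    exact sqrt_sub_sqrt_sq_div_sub_le (hpos j hj.1 (by omega)) (hpos (j + 1) (by omega) (by omega)).le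

/-- For every integer `M ≥ 1` and all real numbers
`0 = k 0 < k 1 < ⋯ < k M`, one has
`∑_{j=1}^{M} (√(k j) − √(k (j−1)))² / (k j − k (j−1))
  ≤ 1 + ∑_{j=1}^{M−1} (k (j+1) − k j)/(4 k j)`. -/
theorem stmt_0 (M : ℕ) (hM : 1 ≤ M) (k : ℕ → ℝ) (hk0 : k 0 = 0)
    (hmono : ∀ j, 1 ≤ j → j ≤ M → k (j - 1) < k j) :
    ∑ j ∈ Finset.Icc 1 M,
        (Real.sqrt (k j) - Real.sqrt (k (j - 1))) ^ 2 / (k j - k (j - 1))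
      ≤ 1 + ∑ j ∈ Finset.Icc 1 (M - 1), (k (j + 1) - k j) / (4 * k j) :=
  stmt_0_general M k hk0 hmono
end

section
/- Let M ≥ 1 and let S_0 ≥ S_1 ≥ ⋯ ≥ S_M be nonnegative real numbers with S_0 > 0 and S_M = 0, let M′ = min{1 ≤ j ≤ M : S_j = 0}, and use the convention 0/0 = 0. Then Σ_{j=1}^{M} (√S_{j−1} − √S_j)² / (S_{j−1} − S_j) ≤ 1 + Σ_{j=1}^{M′−1} (S_{j−1} − S_j)/(4 S_j). -/
/-!
Write `a = S (j - 1)` and `b = S j`. When `0 < b ≤ a`, the `j`-th summand is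
`(√a - √b) / (√a + √b)`, and since `(√a + √b)² ≥ 4b` this is at most `(a - b) / (4b)`; this
covers every `j < M'`. Since `S` is antitone and nonnegative it vanishes from `M'` on, so the
summand `j = M'` is `S (M' - 1) / S (M' - 1) ≤ 1` and all later ones are `0 / 0 = 0`.
-/

open Finset

namespace Real

lemma sqrt_sub_sqrt_mul_sqrt_add_sqrt {a b : ℝ} (ha : 0 ≤ a) (hb : 0 ≤ b) :
    (√a - √b) * (√a + √b) = a - b := by
  linear_combination sq_sqrt ha - sq_sqrt hb

lemma sqrt_sub_sqrt_sq_div_sub_le_one {a b : ℝ} (hb : 0 ≤ b) (hba : b ≤ a) :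
    (√a - √b) ^ 2 / (a - b) ≤ 1 := by
  have hd : 0 ≤ √a - √b := sub_nonneg.mpr (sqrt_le_sqrt hba)
  refine div_le_one_of_le₀ ?_ (sub_nonneg.mpr hba)
  calc (√a - √b) ^ 2 ≤ (√a - √b) * (√a + √b) := by
        rw [sq]; gcongr; linarith [sqrt_nonneg b]
    _ = a - b := sqrt_sub_sqrt_mul_sqrt_add_sqrt (hb.trans hba) hb

lemma sqrt_sub_sqrt_sq_div_sub_le_s1 {a b : ℝ} (hb : 0 < b) (hba : b ≤ a) :
    (√a - √b) ^ 2 / (a - b) ≤ (a - b) / (4 * b) := by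
  obtain rfl | hlt := hba.eq_or_lt
  · simp
  have hd : 0 < √a - √b := sub_pos.mpr (sqrt_lt_sqrt hb.le hlt)
  have h4b : 4 * b ≤ (√a + √b) ^ 2 :=
    calc 4 * b = (√b + √b) ^ 2 := by rw [← two_mul, mul_pow, sq_sqrt hb.le]; norm_num
      _ ≤ (√a + √b) ^ 2 := by gcongr
  rw [← sqrt_sub_sqrt_mul_sqrt_add_sqrt (hb.trans hlt).le hb.le, sq, mul_div_mul_left _ _ hd.ne',
    div_le_div_iff₀ (by positivity) (by positivity)]
  calc (√a - √b) * (4 * b) ≤ (√a - √b) * (√a + √b) ^ 2 := by gcongr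
    _ = (√a - √b) * (√a + √b) * (√a + √b) := by ring

end Real

lemma sum_Ioc_sqrt_sub_sqrt_sq_div_sub_le_one {S : ℕ → ℝ} {m n : ℕ} (hm : 0 ≤ S m)
    (hS : ∀ j ∈ Ioc m n, S j = 0) :
    ∑ j ∈ Ioc m n, (√(S (j - 1)) - √(S j)) ^ 2 / (S (j - 1) - S j) ≤ 1 := by
  rcases le_or_gt n m with hnm | hmn
  · simp [Ioc_eq_empty_of_le hnm]
  have hm1 : m + 1 ∈ Ioc m n := mem_Ioc.mpr ⟨m.lt_succ_self, hmn⟩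
  rw [sum_eq_single_of_mem (m + 1) hm1]
  · simpa [hS _ hm1] using Real.sqrt_sub_sqrt_sq_div_sub_le_one le_rfl hm
  · intro j hj hne
    have hj' := mem_Ioc.mp hj
    rw [hS j hj, hS (j - 1) (mem_Ioc.mpr ⟨by omega, by omega⟩)]
    simp

theorem stmt_1_general (M : ℕ) (S : ℕ → ℝ)
    (hnonneg : ∀ j, j ≤ M → 0 ≤ S j)
    (hmono : ∀ j, j < M → S (j + 1) ≤ S j)
    (M' : ℕ) (hM'M : M' ≤ M) (hM'zero : S M' = 0)
    (hM'least : ∀ j, 1 ≤ j → j < M' → S j ≠ 0) :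
    ∑ j ∈ Finset.Icc 1 M,
        (Real.sqrt (S (j - 1)) - Real.sqrt (S j)) ^ 2 / (S (j - 1) - S j)
      ≤ 1 + ∑ j ∈ Finset.Icc 1 (M' - 1), (S (j - 1) - S j) / (4 * S j) := by
  have hanti : AntitoneOn S (Set.Iic M) :=
    antitoneOn_of_succ_le Set.ordConnected_Iic fun j _ _ hj => hmono j hj
  have hanti' {i j : ℕ} (hij : i ≤ j) (hj : j ≤ M) : S j ≤ S i :=
    hanti (Set.mem_Iic.mpr (hij.trans hj)) (Set.mem_Iic.mpr hj) hij
  have htail : ∀ j ∈ Ioc (M' - 1) M, S j = 0 := fun j hj => by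
    have hj' := mem_Ioc.mp hj
    exact le_antisymm (hM'zero ▸ hanti' (by omega) hj'.2) (hnonneg j hj'.2)
  change ∑ j ∈ Ioc 0 M, _ ≤ 1 + ∑ j ∈ Ioc 0 (M' - 1), _
  rw [← sum_Ioc_consecutive _ (Nat.zero_le (M' - 1)) (by omega : M' - 1 ≤ M), add_comm]
  refine add_le_add (sum_Ioc_sqrt_sub_sqrt_sq_div_sub_le_one (hnonneg _ (by omega)) htail)
    (sum_le_sum fun j hj => ?_)
  have hj := mem_Ioc.mp hj
  exact Real.sqrt_sub_sqrt_sq_div_sub_le_s1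
    ((hnonneg j (by omega)).lt_of_ne (hM'least j hj.1 (by omega)).symm) (hanti' (by omega) (by omega))

/-- Let `M ≥ 1` and let `S 0 ≥ S 1 ≥ ⋯ ≥ S M` be nonnegative reals with
`S 0 > 0` and `S M = 0`, let `M'` be the least index `1 ≤ j ≤ M` with `S j = 0`, and use the
convention `0/0 = 0` (automatic for Lean's real division).  Then
`∑_{j=1}^{M} (√(S (j−1)) − √(S j))² / (S (j−1) − S j)
  ≤ 1 + ∑_{j=1}^{M'−1} (S (j−1) − S j)/(4 S j)`. -/
theorem stmt_1 (M : ℕ) (hM : 1 ≤ M) (S : ℕ → ℝ)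
    (hnonneg : ∀ j, j ≤ M → 0 ≤ S j)
    (hmono : ∀ j, j < M → S (j + 1) ≤ S j)
    (hS0 : 0 < S 0) (hSM : S M = 0)
    (M' : ℕ) (hM'1 : 1 ≤ M') (hM'M : M' ≤ M) (hM'zero : S M' = 0)
    (hM'least : ∀ j, 1 ≤ j → j < M' → S j ≠ 0) :
    ∑ j ∈ Finset.Icc 1 M,
        (Real.sqrt (S (j - 1)) - Real.sqrt (S j)) ^ 2 / (S (j - 1) - S j)
      ≤ 1 + ∑ j ∈ Finset.Icc 1 (M' - 1), (S (j - 1) - S j) / (4 * S j) :=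
  stmt_1_general M S hnonneg hmono M' hM'M hM'zero hM'least
end

section
/- Let V_1 ⊆ V_2 ⊆ ⋯ ⊆ V_M be a chain of linear subspaces of ℝⁿ with dim V_m = k_m, where k_1 < k_2 < ⋯ < k_M, let P_m denote the orthogonal projection onto V_m with P_0 = 0 and k_0 = 0, let f ∈ ℝⁿ, and let ε be a random vector in ℝⁿ with E ε = 0 and E ε εᵀ = σ² Iₙ; set y = f + ε. Then for every w ∈ W_M, (1/n) E‖Σ_{m=1}^{M} w_m P_m y − f‖² = Σ_{j=1}^{M} [(1 − γ_j)² ‖(P_j − P_{j−1}) f‖²/n + (σ²/n)(k_j − k_{j−1}) γ_j²] + ‖f − P_M f‖²/n. -/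
/-!
Write `P m` for the projection onto `V m` and `D j = P j - P (j - 1)`. Because the subspaces are
nested, the `D j` have mutually orthogonal ranges inside `V M`, and summation by parts turns
`A = ∑ m, w m • P m` into `∑ j, γ j • D j`. Since `ε` is centred, the risk is `‖A f - f‖ ^ 2`
plus `E ‖A ε‖ ^ 2`. The bias `A f - f = ∑ j, (γ j - 1) • D j f - (f - P M f)` is an orthogonal
sum, so Pythagoras gives `∑ j, (1 - γ j) ^ 2 * ‖D j f‖ ^ 2 + ‖f - P M f‖ ^ 2`. For isotropic
noise `E ‖A ε‖ ^ 2 = σ² ∑ i, ‖A eᵢ‖ ^ 2 = σ² ∑ j, γ j ^ 2 * trace (D j)`, and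
`trace (D j) = k j - k (j - 1)` because the trace of an orthogonal projection is the dimension
of its range.
-/

open MeasureTheory Module Finset
open scoped RealInnerProductSpace

section Telescoping

variable {R E : Type*} [Semiring R] [AddCommGroup E] [Module R E]

theorem sum_Icc_one_sub_pred (a : ℕ → E) (ha : a 0 = 0) (m : ℕ) :
    ∑ j ∈ Icc 1 m, (a j - a (j - 1)) = a m := by
  induction m with
  | zero => simp [ha]
  | succ m ih => rw [sum_Icc_succ_top (by omega), ih, Nat.add_sub_cancel, add_sub_cancel]

theorem sum_Icc_smul_eq_sum_tail_smul_sub (w : ℕ → R) (a : ℕ → E) (ha : a 0 = 0) (M : ℕ) :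
    ∑ m ∈ Icc 1 M, w m • a m = ∑ j ∈ Icc 1 M, (∑ m ∈ Icc j M, w m) • (a j - a (j - 1)) := by
  calc ∑ m ∈ Icc 1 M, w m • a m
      = ∑ m ∈ Icc 1 M, ∑ j ∈ Icc 1 m, w m • (a j - a (j - 1)) := by
        simp_rw [← smul_sum, sum_Icc_one_sub_pred a ha]
    _ = ∑ j ∈ Icc 1 M, ∑ m ∈ Icc j M, w m • (a j - a (j - 1)) :=
        sum_comm' fun m j => by simp only [mem_Icc]; omega
    _ = _ := by simp_rw [sum_smul]

end Telescoping

theorem norm_sum_sq_of_pairwise_inner_eq_zero {ι E : Type*} [NormedAddCommGroup E]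
    [InnerProductSpace ℝ E] {s : Finset ι} {v : ι → E}
    (h : (s : Set ι).Pairwise fun i j => ⟪v i, v j⟫ = 0) :
    ‖∑ i ∈ s, v i‖ ^ 2 = ∑ i ∈ s, ‖v i‖ ^ 2 := by
  rw [← real_inner_self_eq_norm_sq, sum_inner]
  refine sum_congr rfl fun i hi => ?_
  rw [inner_sum, sum_eq_single_of_mem i hi fun j hj hji => h hi hj hji.symm,
    real_inner_self_eq_norm_sq]

namespace Submodule

variable {E : Type*} [NormedAddCommGroup E] [InnerProductSpace ℝ E]
  {K L : Submodule ℝ E} [K.HasOrthogonalProjection] [L.HasOrthogonalProjection]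

theorem starProjection_starProjection_of_le (h : K ≤ L) (x : E) :
    K.starProjection (L.starProjection x) = K.starProjection x :=
  congr($(starProjection_comp_starProjection_of_le h) x)

theorem starProjection_sub_starProjection_mem_orthogonal (h : K ≤ L) (x : E) :
    L.starProjection x - K.starProjection x ∈ Kᗮ := by
  simpa only [starProjection_starProjection_of_le h] using
    sub_starProjection_mem_orthogonal (K := K) (L.starProjection x)

theorem inner_starProjection_sub_starProjection_eq_zero (h : K ≤ L) {u : E} (hu : u ∈ K)
    (x : E) : ⟪u, L.starProjection x - K.starProjection x⟫ = 0 :=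
  inner_right_of_mem_orthogonal hu (starProjection_sub_starProjection_mem_orthogonal h x)

theorem norm_starProjection_sub_starProjection_sq (h : K ≤ L) (x : E) :
    ‖L.starProjection x - K.starProjection x‖ ^ 2 =
      ‖L.starProjection x‖ ^ 2 - ‖K.starProjection x‖ ^ 2 := by
  have hperp := inner_starProjection_sub_starProjection_eq_zero h (K.starProjection_apply_mem x) x
  have := norm_add_sq_real (K.starProjection x) (L.starProjection x - K.starProjection x)
  rw [add_sub_cancel, hperp] at this
  linarith

theorem sum_norm_sq_starProjection {ι : Type*} [Fintype ι] [FiniteDimensional ℝ E]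
    (b : OrthonormalBasis ι ℝ E) :
    ∑ i, ‖K.starProjection (b i)‖ ^ 2 = finrank ℝ K := by
  have hproj : LinearMap.IsProj K (K.starProjection : E →ₗ[ℝ] E) :=
    ⟨K.starProjection_apply_mem, fun _ hx => starProjection_eq_self_iff.mpr hx⟩
  rw [← hproj.trace, LinearMap.trace_eq_sum_inner _ b]
  refine sum_congr rfl fun i _ => ?_
  rw [ContinuousLinearMap.coe_coe, ← real_inner_self_eq_norm_sq,
    inner_starProjection_left_eq_right,
    starProjection_eq_self_iff.mpr (K.starProjection_apply_mem _)]

theorem sum_norm_sq_starProjection_sub_starProjection {ι : Type*} [Fintype ι]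
    [FiniteDimensional ℝ E] (b : OrthonormalBasis ι ℝ E) (h : K ≤ L) :
    ∑ i, ‖L.starProjection (b i) - K.starProjection (b i)‖ ^ 2 =
      (finrank ℝ L : ℝ) - finrank ℝ K := by
  simp_rw [norm_starProjection_sub_starProjection_sq h, sum_sub_distrib,
    sum_norm_sq_starProjection]

end Submodule

theorem monotoneOn_Iic_of_eq_bot_of_le_succ {α : Type*} [Preorder α] [OrderBot α] {V : ℕ → α}
    {M : ℕ} (hV0 : V 0 = ⊥) (hchain : ∀ j, 1 ≤ j → j < M → V j ≤ V (j + 1)) :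
    MonotoneOn V (Set.Iic M) := by
  refine monotoneOn_of_le_succ Set.ordConnected_Iic fun j _ _ hj => ?_
  rw [Order.succ_eq_add_one] at hj ⊢
  rcases j with _ | j
  · rw [hV0]; exact bot_le
  · exact hchain _ (by omega) (Set.mem_Iic.1 hj)

section NestedChain

variable {E : Type*} [NormedAddCommGroup E] [InnerProductSpace ℝ E]
  {V : ℕ → Submodule ℝ E} [∀ m, (V m).HasOrthogonalProjection] {M : ℕ}

theorem starProjection_apply_eq_zero_of_eq_bot (hV0 : V 0 = ⊥) (x : E) :
    (V 0).starProjection x = 0 :=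
  (Submodule.mem_bot ℝ).1 (hV0 ▸ (V 0).starProjection_apply_mem x)

theorem inner_starProjection_increments_eq_zero (hV : MonotoneOn V (Set.Iic M)) {i j : ℕ}
    (hij : i < j) (hjM : j ≤ M) (x y : E) :
    ⟪(V i).starProjection x - (V (i - 1)).starProjection x,
      (V j).starProjection y - (V (j - 1)).starProjection y⟫ = 0 := by
  have hle : ∀ {a b : ℕ}, a ≤ b → b ≤ M → V a ≤ V b := fun hab hb =>
    hV (Set.mem_Iic.2 (hab.trans hb)) (Set.mem_Iic.2 hb) hab
  refine Submodule.inner_starProjection_sub_starProjection_eq_zero (hle (by omega) hjM) ?_ y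
  exact sub_mem (hle (by omega) (by omega) ((V i).starProjection_apply_mem x))
    (hle (by omega) (by omega) ((V (i - 1)).starProjection_apply_mem x))

theorem norm_sum_smul_increments_sq (hV : MonotoneOn V (Set.Iic M)) (c : ℕ → ℝ) (x : E) :
    ‖∑ j ∈ Icc 1 M, c j • ((V j).starProjection x - (V (j - 1)).starProjection x)‖ ^ 2 =
      ∑ j ∈ Icc 1 M, c j ^ 2 * ‖(V j).starProjection x - (V (j - 1)).starProjection x‖ ^ 2 := by
  rw [norm_sum_sq_of_pairwise_inner_eq_zero]
  · simp_rw [norm_smul, mul_pow, Real.norm_eq_abs, sq_abs]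
  · intro i hi j hj hij
    rw [real_inner_smul_left, real_inner_smul_right]
    rcases hij.lt_or_gt with h | h
    · rw [inner_starProjection_increments_eq_zero hV h (mem_Icc.1 hj).2, mul_zero, mul_zero]
    · rw [real_inner_comm, inner_starProjection_increments_eq_zero hV h (mem_Icc.1 hi).2,
        mul_zero, mul_zero]

theorem sum_smul_starProjection_eq_sum_tail_smul_increments (hV0 : V 0 = ⊥) (w : ℕ → ℝ)
    (x : E) :
    ∑ m ∈ Icc 1 M, w m • (V m).starProjection x =
      ∑ j ∈ Icc 1 M, (∑ m ∈ Icc j M, w m) •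
        ((V j).starProjection x - (V (j - 1)).starProjection x) :=
  sum_Icc_smul_eq_sum_tail_smul_sub w _ (starProjection_apply_eq_zero_of_eq_bot hV0 x) M

theorem norm_sum_smul_starProjection_sub_sq (hV : MonotoneOn V (Set.Iic M)) (hV0 : V 0 = ⊥)
    (w : ℕ → ℝ) (f : E) :
    ‖∑ m ∈ Icc 1 M, w m • (V m).starProjection f - f‖ ^ 2 =
      ∑ j ∈ Icc 1 M, (1 - ∑ m ∈ Icc j M, w m) ^ 2 *
        ‖(V j).starProjection f - (V (j - 1)).starProjection f‖ ^ 2 +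
      ‖f - (V M).starProjection f‖ ^ 2 := by
  set D : ℕ → E := fun j => (V j).starProjection f - (V (j - 1)).starProjection f
  have hdecomp : ∑ m ∈ Icc 1 M, w m • (V m).starProjection f - f =
      -(∑ j ∈ Icc 1 M, (1 - ∑ m ∈ Icc j M, w m) • D j + (f - (V M).starProjection f)) := by
    rw [sum_smul_starProjection_eq_sum_tail_smul_increments hV0]
    simp_rw [sub_smul, one_smul, sum_sub_distrib, D,
      sum_Icc_one_sub_pred (fun j => (V j).starProjection f)
        (starProjection_apply_eq_zero_of_eq_bot hV0 f)]
    abel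
  have hmem : ∑ j ∈ Icc 1 M, (1 - ∑ m ∈ Icc j M, w m) • D j ∈ V M := by
    refine Submodule.sum_mem _ fun j hj => Submodule.smul_mem _ _ ?_
    have hle : ∀ {a}, a ≤ M → V a ≤ V M := fun ha =>
      hV (Set.mem_Iic.2 ha) (Set.mem_Iic.2 le_rfl) ha
    exact sub_mem (hle (mem_Icc.1 hj).2 ((V j).starProjection_apply_mem f))
      (hle ((Nat.sub_le j 1).trans (mem_Icc.1 hj).2) ((V (j - 1)).starProjection_apply_mem f))
  rw [hdecomp, norm_neg, norm_add_sq_real,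
    Submodule.inner_right_of_mem_orthogonal hmem (Submodule.sub_starProjection_mem_orthogonal f),
    norm_sum_smul_increments_sq hV]
  ring

theorem norm_sum_smul_starProjection_sq (hV : MonotoneOn V (Set.Iic M)) (hV0 : V 0 = ⊥)
    (w : ℕ → ℝ) (x : E) :
    ‖∑ m ∈ Icc 1 M, w m • (V m).starProjection x‖ ^ 2 =
      ∑ j ∈ Icc 1 M, (∑ m ∈ Icc j M, w m) ^ 2 *
        ‖(V j).starProjection x - (V (j - 1)).starProjection x‖ ^ 2 := by
  rw [sum_smul_starProjection_eq_sum_tail_smul_increments hV0, norm_sum_smul_increments_sq hV]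

theorem sum_norm_sq_sum_smul_starProjection [FiniteDimensional ℝ E] {ι : Type*} [Fintype ι]
    (b : OrthonormalBasis ι ℝ E) (hV : MonotoneOn V (Set.Iic M)) (hV0 : V 0 = ⊥) (w : ℕ → ℝ) :
    ∑ i, ‖∑ m ∈ Icc 1 M, w m • (V m).starProjection (b i)‖ ^ 2 =
      ∑ j ∈ Icc 1 M, (∑ m ∈ Icc j M, w m) ^ 2 *
        ((finrank ℝ (V j) : ℝ) - finrank ℝ (V (j - 1))) := by
  simp_rw [norm_sum_smul_starProjection_sq hV hV0]
  rw [sum_comm]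
  refine sum_congr rfl fun j hj => ?_
  have hjM := (mem_Icc.1 hj).2
  have hle : V (j - 1) ≤ V j :=
    hV (Set.mem_Iic.2 ((Nat.sub_le j 1).trans hjM)) (Set.mem_Iic.2 hjM) (Nat.sub_le j 1)
  rw [← mul_sum, Submodule.sum_norm_sq_starProjection_sub_starProjection b hle]

end NestedChain

section SecondMoments

variable {Ω : Type*} [MeasurableSpace Ω] {μ : Measure Ω}

theorem integral_norm_add_sq_of_integral_eq_zero {E : Type*} [NormedAddCommGroup E]
    [InnerProductSpace ℝ E] [CompleteSpace E] [IsProbabilityMeasure μ] (c : E) {X : Ω → E}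
    (hX : Integrable X μ) (hX0 : ∫ ω, X ω ∂μ = 0)
    (hX2 : Integrable (fun ω => ‖X ω‖ ^ 2) μ) :
    ∫ ω, ‖c + X ω‖ ^ 2 ∂μ = ‖c‖ ^ 2 + ∫ ω, ‖X ω‖ ^ 2 ∂μ := by
  have hinner : Integrable (fun ω => 2 * ⟪c, X ω⟫) μ := (hX.const_inner c).const_mul 2
  have hinner0 : ∫ ω, ⟪c, X ω⟫ ∂μ = 0 := by rw [integral_inner hX, hX0, inner_zero_right]
  simp_rw [norm_add_sq_real]
  rw [integral_add (f := fun ω => ‖c‖ ^ 2 + 2 * ⟪c, X ω⟫) ((integrable_const _).add hinner) hX2,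
    integral_add (integrable_const _) hinner, integral_const_mul, hinner0]
  simp

variable {ι F : Type*} [Fintype ι] [NormedAddCommGroup F] [InnerProductSpace ℝ F]

theorem norm_sq_apply_eq_sum_sum (T : EuclideanSpace ℝ ι →L[ℝ] F) (x : EuclideanSpace ℝ ι) :
    ‖T x‖ ^ 2 = ∑ i, ∑ j, x i * x j *
      ⟪T (EuclideanSpace.basisFun ι ℝ i), T (EuclideanSpace.basisFun ι ℝ j)⟫ := by
  conv_lhs => rw [← (EuclideanSpace.basisFun ι ℝ).sum_repr x]
  simp_rw [map_sum, map_smul, ← real_inner_self_eq_norm_sq, sum_inner, inner_sum,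
    real_inner_smul_left, real_inner_smul_right, EuclideanSpace.basisFun_repr, mul_assoc]

theorem integrable_norm_sq_apply (T : EuclideanSpace ℝ ι →L[ℝ] F) {ε : Ω → EuclideanSpace ℝ ι}
    (hε2 : ∀ i j, Integrable (fun ω => ε ω i * ε ω j) μ) :
    Integrable (fun ω => ‖T (ε ω)‖ ^ 2) μ := by
  simp_rw [norm_sq_apply_eq_sum_sum]
  exact integrable_finsetSum _ fun i _ => integrable_finsetSum _ fun j _ =>
    (hε2 i j).mul_const _

theorem integral_norm_sq_apply_of_isotropic [DecidableEq ι] (T : EuclideanSpace ℝ ι →L[ℝ] F)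
    {ε : Ω → EuclideanSpace ℝ ι} {σ2 : ℝ} (hε2 : ∀ i j, Integrable (fun ω => ε ω i * ε ω j) μ)
    (hcov : ∀ i j, ∫ ω, ε ω i * ε ω j ∂μ = if i = j then σ2 else 0) :
    ∫ ω, ‖T (ε ω)‖ ^ 2 ∂μ = σ2 * ∑ i, ‖T (EuclideanSpace.basisFun ι ℝ i)‖ ^ 2 := by
  simp_rw [norm_sq_apply_eq_sum_sum T (ε _)]
  rw [integral_finsetSum _ fun i _ => integrable_finsetSum _ fun j _ => (hε2 i j).mul_const _]
  simp_rw [integral_finsetSum _ fun j _ => (hε2 _ j).mul_const _, integral_mul_const, hcov,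
    ite_mul, zero_mul, sum_ite_eq, mem_univ, if_true, real_inner_self_eq_norm_sq, mul_sum]

end SecondMoments

theorem stmt_3_general (n M : ℕ) (σ2 : ℝ)
    (V : ℕ → Submodule ℝ (EuclideanSpace ℝ (Fin n)))
    (hV0 : V 0 = ⊥)
    (hchain : ∀ j, 1 ≤ j → j < M → V j ≤ V (j + 1))
    (k : ℕ → ℕ) (hk0 : k 0 = 0)
    (hdim : ∀ m, 1 ≤ m → m ≤ M → Module.finrank ℝ (V m) = k m)
    (f : EuclideanSpace ℝ (Fin n))
    {Ω : Type*} [MeasurableSpace Ω] (μ : Measure Ω) [IsProbabilityMeasure μ]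
    (ε : Ω → EuclideanSpace ℝ (Fin n))
    (hint : Integrable ε μ)
    (hmean : ∫ ω, ε ω ∂μ = 0)
    (hint2 : ∀ i j : Fin n, Integrable (fun ω => ε ω i * ε ω j) μ)
    (hcov : ∀ i j : Fin n, ∫ ω, ε ω i * ε ω j ∂μ = if i = j then σ2 else 0)
    (w : ℕ → ℝ) :
    (1 / (n : ℝ)) *
        ∫ ω, ‖(∑ m ∈ Finset.Icc 1 M,
            w m • ((V m).subtypeL.comp (Submodule.orthogonalProjection (V m))) (f + ε ω)) - f‖ ^ 2 ∂μ
      = (∑ j ∈ Finset.Icc 1 M,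
          ((1 - ∑ m ∈ Finset.Icc j M, w m) ^ 2 *
              ‖((V j).subtypeL.comp (Submodule.orthogonalProjection (V j))) f -
                ((V (j - 1)).subtypeL.comp (Submodule.orthogonalProjection (V (j - 1)))) f‖ ^ 2 / n
            + (σ2 / n) * ((k j : ℝ) - (k (j - 1) : ℝ)) * (∑ m ∈ Finset.Icc j M, w m) ^ 2))
        + ‖f - ((V M).subtypeL.comp (Submodule.orthogonalProjection (V M))) f‖ ^ 2 / n := by
  have hP : ∀ m, (V m).subtypeL.comp (Submodule.orthogonalProjection (V m)) =
      (V m).starProjection := fun _ => rfl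
  simp only [hP]
  have hV := monotoneOn_Iic_of_eq_bot_of_le_succ hV0 hchain
  have hk : ∀ j ≤ M, (finrank ℝ (V j) : ℝ) = k j := by
    rintro (_ | j) hj
    · rw [hV0, finrank_bot, hk0]
    · rw [hdim _ (by omega) hj]
  set A := ∑ m ∈ Icc 1 M, w m • (V m).starProjection
  have hA : ∀ x, A x = ∑ m ∈ Icc 1 M, w m • (V m).starProjection x := fun x => by simp [A]
  have hAε : ∫ ω, A (ε ω) ∂μ = 0 := by rw [A.integral_comp_comm hint, hmean, map_zero]
  calc (1 / (n : ℝ)) * ∫ ω, ‖∑ m ∈ Icc 1 M, w m • (V m).starProjection (f + ε ω) - f‖ ^ 2 ∂μ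
      = (1 / n) * (‖A f - f‖ ^ 2 + σ2 * ∑ i, ‖A (EuclideanSpace.basisFun (Fin n) ℝ i)‖ ^ 2) := by
        simp_rw [← hA, map_add, add_sub_right_comm]
        rw [integral_norm_add_sq_of_integral_eq_zero _ (A.integrable_comp hint) hAε
          (integrable_norm_sq_apply A hint2), integral_norm_sq_apply_of_isotropic A hint2 hcov]
    _ = 1 / n * ((∑ j ∈ Icc 1 M, (1 - ∑ m ∈ Icc j M, w m) ^ 2 *
            ‖(V j).starProjection f - (V (j - 1)).starProjection f‖ ^ 2 +
          ‖f - (V M).starProjection f‖ ^ 2) +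
          σ2 * ∑ j ∈ Icc 1 M, ((k j : ℝ) - k (j - 1)) * (∑ m ∈ Icc j M, w m) ^ 2) := by
        simp_rw [hA]
        rw [norm_sum_smul_starProjection_sub_sq hV hV0,
          sum_norm_sq_sum_smul_starProjection _ hV hV0]
        congr 3
        refine sum_congr rfl fun j hj => ?_
        have hjM := (mem_Icc.1 hj).2
        rw [hk j hjM, hk (j - 1) ((Nat.sub_le j 1).trans hjM), mul_comm]
    _ = _ := by
        rw [sum_add_distrib, ← sum_div]
        simp_rw [mul_assoc (σ2 / n)]
        rw [← mul_sum]
        ring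

/-- Risk identity for the nested model-averaging estimator.  Let
`V 1 ⊆ ⋯ ⊆ V M` be a chain of subspaces of `ℝⁿ` (with `V 0 = ⊥`), `dim (V m) = k m`
with `k 1 < ⋯ < k M` and `k 0 = 0`, `P m` the orthogonal projection onto `V m`
(`P 0 = 0`), `f ∈ ℝⁿ`, and `ε` a random vector with `E ε = 0`, `E ε εᵀ = σ² Iₙ`, and
`y = f + ε`.  Then, for every `w` in the simplex `W_M`, writing `γ j = ∑_{m=j}^{M} w m`:
`(1/n) E ‖∑_m w m • P m y − f‖² =
  ∑_{j=1}^{M} [(1 − γ j)² ‖(P j − P (j−1)) f‖²/n + (σ²/n)(k j − k (j−1)) γ j²]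
  + ‖f − P M f‖²/n`. -/
theorem stmt_3 (n M : ℕ) (hn : 0 < n) (hM : 1 ≤ M) (σ2 : ℝ)
    (V : ℕ → Submodule ℝ (EuclideanSpace ℝ (Fin n)))
    (hV0 : V 0 = ⊥)
    (hchain : ∀ j, 1 ≤ j → j < M → V j ≤ V (j + 1))
    (k : ℕ → ℕ) (hk0 : k 0 = 0)
    (hdim : ∀ m, 1 ≤ m → m ≤ M → Module.finrank ℝ (V m) = k m)
    (hkmono : ∀ m, 1 ≤ m → m < M → k m < k (m + 1))
    (f : EuclideanSpace ℝ (Fin n))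
    {Ω : Type*} [MeasurableSpace Ω] (μ : Measure Ω) [IsProbabilityMeasure μ]
    (ε : Ω → EuclideanSpace ℝ (Fin n))
    (hmeas : Measurable ε)
    (hint : Integrable ε μ)
    (hmean : ∫ ω, ε ω ∂μ = 0)
    (hint2 : ∀ i j : Fin n, Integrable (fun ω => ε ω i * ε ω j) μ)
    (hcov : ∀ i j : Fin n, ∫ ω, ε ω i * ε ω j ∂μ = if i = j then σ2 else 0)
    (w : ℕ → ℝ)
    (hw_nonneg : ∀ m ∈ Finset.Icc 1 M, 0 ≤ w m)
    (hw_sum : ∑ m ∈ Finset.Icc 1 M, w m = 1) :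
    (1 / (n : ℝ)) *
        ∫ ω, ‖(∑ m ∈ Finset.Icc 1 M,
            w m • ((V m).subtypeL.comp (Submodule.orthogonalProjection (V m))) (f + ε ω)) - f‖ ^ 2 ∂μ
      = (∑ j ∈ Finset.Icc 1 M,
          ((1 - ∑ m ∈ Finset.Icc j M, w m) ^ 2 *
              ‖((V j).subtypeL.comp (Submodule.orthogonalProjection (V j))) f -
                ((V (j - 1)).subtypeL.comp (Submodule.orthogonalProjection (V (j - 1)))) f‖ ^ 2 / n
            + (σ2 / n) * ((k j : ℝ) - (k (j - 1) : ℝ)) * (∑ m ∈ Finset.Icc j M, w m) ^ 2))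
        + ‖f - ((V M).subtypeL.comp (Submodule.orthogonalProjection (V M))) f‖ ^ 2 / n :=
  stmt_3_general n M σ2 V hV0 hchain k hk0 hdim f μ ε hint hmean hint2 hcov w
end

section
/- Let n ∈ ℕ, σ² > 0, p ≤ n, M ≤ p, and θ_1, …, θ_p ∈ ℝ with θ_1² ≥ θ_2² ≥ ⋯ ≥ θ_M². With nested model sizes k_m = m for m = 1, …, M, one has min_{w ∈ W_M} R_n(w) = σ²/n + Σ_{j=2}^{M} θ_j² σ²/(n θ_j² + σ²) + Σ_{j=M+1}^{p} θ_j², and the minimum is attained at the weight vector whose cumulative weights are γ_1 = 1 and γ_j = θ_j²/(θ_j² + σ²/n) for 2 ≤ j ≤ M. -/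
/-- Cumulative weight `γ j = ∑_{m=j}^{M} w m`. -/
noncomputable def cumw (M : ℕ) (w : ℕ → ℝ) (j : ℕ) : ℝ := ∑ m ∈ Finset.Icc j M, w m

/-- Nested model-averaging risk with candidate sizes `k_m = m`, `m = 1, …, M`:
`R_n(w) = ∑_{j=1}^{M} [(1−γ_j)² θ_j² + σ² γ_j²/n] + ∑_{l=M+1}^{p} θ_l²`. -/
noncomputable def nestedRisk (n p M : ℕ) (σ2 : ℝ) (θ : ℕ → ℝ) (w : ℕ → ℝ) : ℝ :=
  (∑ j ∈ Finset.Icc 1 M, ((1 - cumw M w j) ^ 2 * θ j ^ 2 + σ2 * (cumw M w j) ^ 2 / n))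
    + ∑ l ∈ Finset.Icc (M + 1) p, θ l ^ 2

/-- Risk of the single nested model of size `m`: `R_n(m) = m σ²/n + ∑_{l=m+1}^{p} θ_l²`. -/
noncomputable def msRisk (n p : ℕ) (σ2 : ℝ) (θ : ℕ → ℝ) (m : ℕ) : ℝ :=
  (m : ℝ) * σ2 / n + ∑ l ∈ Finset.Icc (m + 1) p, θ l ^ 2

/-- `w` belongs to the simplex `W_M`. -/
def InSimplex (M : ℕ) (w : ℕ → ℝ) : Prop :=
  (∀ m ∈ Finset.Icc 1 M, 0 ≤ w m) ∧ ∑ m ∈ Finset.Icc 1 M, w m = 1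

/-- `w` belongs to the discrete weight set `W_M(N)`:
each weight is a multiple of `1/N` in `[0,1]` and the weights sum to one. -/
def InSimplexN (M N : ℕ) (w : ℕ → ℝ) : Prop :=
  InSimplex M w ∧ ∀ m ∈ Finset.Icc 1 M, ∃ t : ℕ, t ≤ N ∧ w m = (t : ℝ) / N

/-- Condition 1 (slowly decaying coefficients): there are `κ > 1`, `0 < δ ≤ ν < 1` with
`κν² < 1` such that `δ ≤ |θ ⌊κ l⌋ / θ l| ≤ ν` for all sufficiently large `l`. -/
def Condition1 (θ : ℕ → ℝ) : Prop :=
  ∃ κ δ ν : ℝ, 1 < κ ∧ 0 < δ ∧ δ ≤ ν ∧ ν < 1 ∧ κ * ν ^ 2 < 1 ∧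
    ∀ᶠ l : ℕ in Filter.atTop,
      δ ≤ |θ ⌊κ * (l : ℝ)⌋₊ / θ l| ∧ |θ ⌊κ * (l : ℝ)⌋₊ / θ l| ≤ ν

/-- Condition 2 (fast decaying coefficients): for every `κ > 1`,
`|θ ⌊κ l⌋ / θ l| → 0` as `l → ∞`. -/
def Condition2 (θ : ℕ → ℝ) : Prop :=
  ∀ κ : ℝ, 1 < κ →
    Filter.Tendsto (fun l : ℕ => |θ ⌊κ * (l : ℝ)⌋₊ / θ l|) Filter.atTop (nhds 0)

/-- `a ≍ b`: there are constants `0 < c ≤ C` with `c b_n ≤ a_n ≤ C b_n` eventually. -/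
def AsympEquiv (a b : ℕ → ℝ) : Prop :=
  ∃ c C : ℝ, 0 < c ∧ c ≤ C ∧ ∀ᶠ n in Filter.atTop, c * b n ≤ a n ∧ a n ≤ C * b n

/-- `a = o(b)`: `a_n / b_n → 0`. -/
def LittleO (a b : ℕ → ℝ) : Prop :=
  Filter.Tendsto (fun n => a n / b n) Filter.atTop (nhds 0)

lemma telescope_sum (g : ℕ → ℝ) : ∀ b a : ℕ, a ≤ b + 1 →
    ∑ m ∈ Finset.Icc a b, (g m - g (m + 1)) = g a - g (b + 1) := by
  intro b
  induction b with
  | zero =>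
    intro a ha
    interval_cases a <;> simp
  | succ b ih =>
    intro a ha
    rcases le_or_gt a (b + 1) with h | h
    · rw [Finset.sum_Icc_succ_top h, ih a h]; ring
    · have : a = b + 2 := by omega
      subst this
      simp

lemma risk_term_lb (n : ℕ) (hn : 0 < n) (σ2 : ℝ) (hσ : 0 < σ2) (t γ : ℝ) (ht : 0 ≤ t) :
    t * σ2 / (n * t + σ2) ≤ (1 - γ) ^ 2 * t + σ2 * γ ^ 2 / n := by
  have hn' : (0:ℝ) < n := by exact_mod_cast hn
  have hd : (0:ℝ) < n * t + σ2 := by positivity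
  have hrw : (1 - γ) ^ 2 * t + σ2 * γ ^ 2 / n = ((1 - γ) ^ 2 * t * n + σ2 * γ ^ 2) / n := by
    field_simp
  rw [hrw, div_le_div_iff₀ hd hn']
  nlinarith [sq_nonneg ((n:ℝ) * t * (1 - γ) - σ2 * γ)]

lemma risk_term_eq (n : ℕ) (hn : 0 < n) (σ2 : ℝ) (hσ : 0 < σ2) (t : ℝ) (ht : 0 ≤ t) :
    (1 - t / (t + σ2 / n)) ^ 2 * t + σ2 * (t / (t + σ2 / n)) ^ 2 / n
      = t * σ2 / (n * t + σ2) := by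
  have hn' : (0:ℝ) < n := by exact_mod_cast hn
  have h1 : t + σ2 / n ≠ 0 := by positivity
  have h2 : (n:ℝ) * t + σ2 ≠ 0 := by positivity
  field_simp
  ring

lemma div_mono_c (c : ℝ) (hc : 0 < c) {a b : ℝ} (hb : 0 ≤ b) (hab : b ≤ a) :
    b / (b + c) ≤ a / (a + c) := by
  have ha : 0 ≤ a := le_trans hb hab
  rw [div_le_div_iff₀ (by positivity) (by positivity)]
  nlinarith

/-- With candidate sizes `k_m = m`, `m = 1, …, M`, and ordered coefficients
`θ_1² ≥ ⋯ ≥ θ_M²`, the minimal nested model-averaging risk over the simplex `W_M` equals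
`σ²/n + ∑_{j=2}^{M} θ_j² σ²/(n θ_j² + σ²) + ∑_{j=M+1}^{p} θ_j²`, and the minimum is attained
at the weight vector whose cumulative weights are `γ_1 = 1` and
`γ_j = θ_j²/(θ_j² + σ²/n)` for `2 ≤ j ≤ M`. -/
theorem stmt_4 (n p M : ℕ) (hn : 0 < n) (hp : p ≤ n) (hM : 1 ≤ M) (hMp : M ≤ p)
    (σ2 : ℝ) (hσ : 0 < σ2) (θ : ℕ → ℝ)
    (hord : ∀ j, 1 ≤ j → j < M → θ (j + 1) ^ 2 ≤ θ j ^ 2) :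
    (∀ w : ℕ → ℝ, InSimplex M w →
        σ2 / n + (∑ j ∈ Finset.Icc 2 M, θ j ^ 2 * σ2 / (n * θ j ^ 2 + σ2))
            + ∑ j ∈ Finset.Icc (M + 1) p, θ j ^ 2
          ≤ nestedRisk n p M σ2 θ w)
    ∧ ∃ w : ℕ → ℝ, InSimplex M w
        ∧ cumw M w 1 = 1
        ∧ (∀ j, 2 ≤ j → j ≤ M → cumw M w j = θ j ^ 2 / (θ j ^ 2 + σ2 / n))
        ∧ nestedRisk n p M σ2 θ w
            = σ2 / n + (∑ j ∈ Finset.Icc 2 M, θ j ^ 2 * σ2 / (n * θ j ^ 2 + σ2))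
              + ∑ j ∈ Finset.Icc (M + 1) p, θ j ^ 2 := by
  have hn' : (0:ℝ) < n := by exact_mod_cast hn
  have hsplit : Finset.Icc 1 M = insert 1 (Finset.Icc 2 M) := by
    ext x; simp only [Finset.mem_Icc, Finset.mem_insert]; omega
  have hnot : (1:ℕ) ∉ Finset.Icc 2 M := by simp
  constructor
  · intro w hw
    have hγ1 : cumw M w 1 = 1 := hw.2
    unfold nestedRisk
    rw [hsplit, Finset.sum_insert hnot]
    have h1 : (1 - cumw M w 1) ^ 2 * θ 1 ^ 2 + σ2 * (cumw M w 1) ^ 2 / n = σ2 / n := by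
      rw [hγ1]; ring
    rw [h1]
    gcongr with j hj
    exact risk_term_lb n hn σ2 hσ (θ j ^ 2) (cumw M w j) (sq_nonneg _)
  · set g : ℕ → ℝ := fun j =>
      if j = 1 then 1 else if j ≤ M then θ j ^ 2 / (θ j ^ 2 + σ2 / n) else 0 with hg
    have hgtop : g (M + 1) = 0 := by
      simp only [hg]; rw [if_neg (by omega), if_neg (by omega)]
    have hg1 : g 1 = 1 := by simp [hg]
    have hgmid : ∀ j, 2 ≤ j → j ≤ M → g j = θ j ^ 2 / (θ j ^ 2 + σ2 / n) := by
      intro j h2 hjM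
      simp only [hg]; rw [if_neg (by omega), if_pos hjM]
    have hg0 : ∀ j, 0 ≤ g j := by
      intro j
      simp only [hg]
      split
      · norm_num
      · split
        · positivity
        · exact le_refl 0
    have hgle1 : ∀ j, g j ≤ 1 := by
      intro j
      simp only [hg]
      split
      · norm_num
      · split
        · rw [div_le_one (by positivity)]
          have : 0 < σ2 / n := by positivity
          linarith
        · norm_num
    have hmono : ∀ m, 1 ≤ m → m ≤ M → g (m + 1) ≤ g m := by
      intro m h1m hmM
      rcases eq_or_lt_of_le h1m with h | h
      · rw [← h, hg1]; exact hgle1 2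
      · rcases eq_or_lt_of_le hmM with h' | h'
        · rw [h', hgtop]; exact hg0 M
        · rw [hgmid m (by omega) hmM, hgmid (m + 1) (by omega) (by omega)]
          exact div_mono_c (σ2 / n) (by positivity) (sq_nonneg _)
            (hord m (by omega) h')
    set w : ℕ → ℝ := fun m => g m - g (m + 1) with hw
    have hcum : ∀ j, 1 ≤ j → j ≤ M → cumw M w j = g j := by
      intro j h1j hjM
      unfold cumw
      rw [hw, telescope_sum g M j (by omega), hgtop]
      ring
    have hsimplex : InSimplex M w := by
      constructor
      · intro m hm
        rw [Finset.mem_Icc] at hm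
        have := hmono m hm.1 hm.2
        simp only [hw]; linarith
      · have := hcum 1 le_rfl hM
        unfold cumw at this
        rw [this, hg1]
    refine ⟨w, hsimplex, ?_, ?_, ?_⟩
    · rw [hcum 1 le_rfl hM, hg1]
    · intro j h2 hjM
      rw [hcum j (by omega) hjM, hgmid j h2 hjM]
    · unfold nestedRisk
      rw [hsplit, Finset.sum_insert hnot]
      have h1 : (1 - cumw M w 1) ^ 2 * θ 1 ^ 2 + σ2 * (cumw M w 1) ^ 2 / n = σ2 / n := by
        rw [hcum 1 le_rfl hM, hg1]; ring
      rw [h1]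
      congr 2
      apply Finset.sum_congr rfl
      intro j hj
      rw [Finset.mem_Icc] at hj
      rw [hcum j (by omega) hj.2, hgmid j hj.1 hj.2]
      exact risk_term_eq n hn σ2 hσ (θ j ^ 2) (sq_nonneg _)
end

section
/- Let (a_l)_{l≥1} be a positive, non-increasing, square-summable sequence, σ² > 0, and for each n let p_n ≤ n with p_n → ∞ and a_{p_n}² ≤ σ²/n for all sufficiently large n. For each n let θ^{(n)} ∈ ℝ^{p_n} be any vector whose absolute values form a permutation of (a_1, …, a_{p_n}), and write ρ_n^{MS} = ρ^{MS}(θ^{(n)}) and ρ_n^{MA} = ρ^{MA}(θ^{(n)}). (i) If Condition 3 holds for (a_l), then ρ_n^{MS} − ρ_n^{MA} ≍ ρ_n^{MS}. (ii) If Condition 4 holds for (a_l), then ρ_n^{MS} − ρ_n^{MA} = o(ρ_n^{MS}). -/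
/-- Risk of the subset model `I ⊆ {1, …, p}`: `|I| σ²/n + ∑_{j ∉ I} θ_j²`. -/
noncomputable def subsetMSRisk (n p : ℕ) (σ2 : ℝ) (θ : ℕ → ℝ) (I : Finset ℕ) : ℝ :=
  (I.card : ℝ) * σ2 / n + ∑ j ∈ Finset.Icc 1 p \ I, θ j ^ 2

/-- Ideal MS risk `ρ^{MS}(θ)`: minimum of the subset-model risks over all `I ⊆ {1, …, p}`. -/
noncomputable def rhoMS (n p : ℕ) (σ2 : ℝ) (θ : ℕ → ℝ) : ℝ :=
  sInf {r : ℝ | ∃ I : Finset ℕ, I ⊆ Finset.Icc 1 p ∧ r = subsetMSRisk n p σ2 θ I}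

/-- Coordinate weight `λ_j = ∑_{I : j ∈ I} w_I` induced by a weight vector over all subsets. -/
noncomputable def coordWeight (p : ℕ) (v : Finset ℕ → ℝ) (j : ℕ) : ℝ :=
  ∑ I ∈ (Finset.Icc 1 p).powerset.filter (fun I => j ∈ I), v I

/-- `v` is a weight vector over all subsets of `{1, …, p}`. -/
def IsSubsetWeight (p : ℕ) (v : Finset ℕ → ℝ) : Prop :=
  (∀ I ∈ (Finset.Icc 1 p).powerset, 0 ≤ v I) ∧ ∑ I ∈ (Finset.Icc 1 p).powerset, v I = 1

/-- All-subset model-averaging risk `∑_{j=1}^{p} [(1 − λ_j)² θ_j² + σ² λ_j²/n]`. -/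
noncomputable def subsetMARisk (n p : ℕ) (σ2 : ℝ) (θ : ℕ → ℝ) (v : Finset ℕ → ℝ) : ℝ :=
  ∑ j ∈ Finset.Icc 1 p,
    ((1 - coordWeight p v j) ^ 2 * θ j ^ 2 + σ2 * (coordWeight p v j) ^ 2 / n)

/-- Ideal MA risk `ρ^{MA}(θ)`: minimum of the all-subset MA risk over all weight vectors. -/
noncomputable def rhoMA (n p : ℕ) (σ2 : ℝ) (θ : ℕ → ℝ) : ℝ :=
  sInf {r : ℝ | ∃ v : Finset ℕ → ℝ, IsSubsetWeight p v ∧ r = subsetMARisk n p σ2 θ v}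

/-- Condition 3 (slowly decaying ordered coefficients). -/
def Condition3 (a : ℕ → ℝ) : Prop :=
  ∃ κ δ ν : ℝ, 1 < κ ∧ 0 < δ ∧ δ ≤ ν ∧ ν < 1 ∧ κ * ν ^ 2 < 1 ∧
    ∀ᶠ l : ℕ in Filter.atTop, δ ≤ a ⌊κ * (l : ℝ)⌋₊ / a l ∧ a ⌊κ * (l : ℝ)⌋₊ / a l ≤ ν

/-- Condition 4 (fast decaying ordered coefficients). -/
def Condition4 (a : ℕ → ℝ) : Prop :=
  ∀ κ : ℝ, 1 < κ →
    Filter.Tendsto (fun l : ℕ => a ⌊κ * (l : ℝ)⌋₊ / a l) Filter.atTop (nhds 0)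


lemma quad_lower (t s lam : ℝ) (ht : 0 ≤ t) (hs : 0 ≤ s) :
    t * s / (t + s) ≤ (1 - lam) ^ 2 * t + s * lam ^ 2 := by
  rcases eq_or_lt_of_le (by linarith : (0:ℝ) ≤ t + s) with h0 | h0
  · have ht0 : t = 0 := by linarith
    simp [← h0, ht0]
    positivity
  · rw [div_le_iff₀ h0]
    nlinarith [sq_nonneg (t * (1 - lam) - s * lam)]

lemma min_sub_div (t s : ℝ) (h0 : 0 < t + s) :
    min t s - t * s / (t + s) = (min t s) ^ 2 / (t + s) := by
  rcases le_total t s with h | h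
  · rw [min_eq_left h]; field_simp; ring
  · rw [min_eq_right h]; field_simp; ring

lemma min_sub_nonneg (t s : ℝ) (ht : 0 ≤ t) (hs : 0 ≤ s) :
    0 ≤ min t s - t * s / (t + s) := by
  rcases eq_or_lt_of_le (by linarith : (0:ℝ) ≤ t + s) with h0 | h0
  · have ht0 : t = 0 := by linarith
    have hs0 : s = 0 := by linarith
    simp [ht0, hs0]
  · rw [min_sub_div t s h0]; positivity

lemma min_sub_le_half (t s : ℝ) (ht : 0 ≤ t) (hs : 0 ≤ s) :
    min t s - t * s / (t + s) ≤ min t s / 2 := by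
  rcases eq_or_lt_of_le (by linarith : (0:ℝ) ≤ t + s) with h0 | h0
  · have ht0 : t = 0 := by linarith
    have hs0 : s = 0 := by linarith
    simp [ht0, hs0]
  · rw [min_sub_div t s h0, div_le_div_iff₀ h0 (by norm_num : (0:ℝ) < 2)]
    rcases le_total t s with h | h
    · rw [min_eq_left h]; nlinarith
    · rw [min_eq_right h]; nlinarith

lemma lam_eq (t s : ℝ) (ht : 0 ≤ t) (hs : 0 ≤ s) :
    (1 - t / (t + s)) ^ 2 * t + s * (t / (t + s)) ^ 2 = t * s / (t + s) := by
  rcases eq_or_lt_of_le (by linarith : (0:ℝ) ≤ t + s) with h0 | h0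
  · have ht0 : t = 0 := by linarith
    simp [← h0, ht0]
  · field_simp
    ring


lemma subsetMSRisk_eq (n p : ℕ) (σ2 : ℝ) (θ : ℕ → ℝ) (I : Finset ℕ)
    (hI : I ⊆ Finset.Icc 1 p) :
    subsetMSRisk n p σ2 θ I
      = ∑ j ∈ Finset.Icc 1 p, (if j ∈ I then σ2 / n else θ j ^ 2) := by
  classical
  rw [Finset.sum_ite, Finset.filter_mem_eq_inter, Finset.inter_eq_right.2 hI,
    ← Finset.sdiff_eq_filter]
  unfold subsetMSRisk
  rw [Finset.sum_const, nsmul_eq_mul, mul_div_assoc]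

lemma rhoMS_eq (n p : ℕ) (σ2 : ℝ) (θ : ℕ → ℝ) :
    rhoMS n p σ2 θ = ∑ j ∈ Finset.Icc 1 p, min (θ j ^ 2) (σ2 / n) := by
  classical
  have hlb : ∀ r ∈ {r : ℝ | ∃ I : Finset ℕ, I ⊆ Finset.Icc 1 p ∧ r = subsetMSRisk n p σ2 θ I},
      ∑ j ∈ Finset.Icc 1 p, min (θ j ^ 2) (σ2 / n) ≤ r := by
    rintro r ⟨I, hI, rfl⟩
    rw [subsetMSRisk_eq n p σ2 θ I hI]
    refine Finset.sum_le_sum fun j _ => ?_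
    split
    · exact min_le_right _ _
    · exact min_le_left _ _
  set I₀ : Finset ℕ := (Finset.Icc 1 p).filter (fun j => σ2 / n ≤ θ j ^ 2) with hI₀
  have hmem : ∑ j ∈ Finset.Icc 1 p, min (θ j ^ 2) (σ2 / n)
      ∈ {r : ℝ | ∃ I : Finset ℕ, I ⊆ Finset.Icc 1 p ∧ r = subsetMSRisk n p σ2 θ I} := by
    refine ⟨I₀, Finset.filter_subset _ _, ?_⟩
    rw [subsetMSRisk_eq n p σ2 θ I₀ (Finset.filter_subset _ _)]
    refine Finset.sum_congr rfl fun j hj => ?_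
    by_cases h : σ2 / n ≤ θ j ^ 2
    · rw [if_pos (by simp [hI₀, Finset.mem_filter, hj, h]), min_eq_right h]
    · rw [if_neg (by simp [hI₀, Finset.mem_filter, h]), min_eq_left (le_of_not_ge h)]
  exact le_antisymm (csInf_le ⟨_, hlb⟩ hmem) (le_csInf ⟨_, hmem⟩ hlb)


lemma coordWeight_prod (p : ℕ) (lam : ℕ → ℝ) (j : ℕ) (hj : j ∈ Finset.Icc 1 p) :
    coordWeight p (fun I => (∏ i ∈ I, lam i) * ∏ i ∈ Finset.Icc 1 p \ I, (1 - lam i)) j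
      = lam j := by
  classical
  set v : Finset ℕ → ℝ :=
    fun I => (∏ i ∈ I, lam i) * ∏ i ∈ Finset.Icc 1 p \ I, (1 - lam i) with hv
  set u : Finset ℕ := (Finset.Icc 1 p).erase j with hu
  have htot : ∑ I ∈ (Finset.Icc 1 p).powerset, v I = 1 := by
    rw [← Finset.prod_add lam (fun i => 1 - lam i) (Finset.Icc 1 p)]
    simp
  have hfilter : (Finset.Icc 1 p).powerset.filter (fun I => j ∉ I) = u.powerset := by
    ext I
    simp only [Finset.mem_filter, Finset.mem_powerset, hu, Finset.subset_erase]
  have hnot : ∑ I ∈ (Finset.Icc 1 p).powerset.filter (fun I => j ∉ I), v I = 1 - lam j := by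
    rw [hfilter]
    have : ∀ I ∈ u.powerset, v I
        = (1 - lam j) * ((∏ i ∈ I, lam i) * ∏ i ∈ u \ I, (1 - lam i)) := by
      intro I hI
      rw [Finset.mem_powerset] at hI
      have hjmem : j ∈ Finset.Icc 1 p \ I := by
        rw [Finset.mem_sdiff]
        exact ⟨hj, fun hcon => (Finset.mem_erase.1 (hI hcon)).1 rfl⟩
      have := (Finset.mul_prod_erase _ (fun i => 1 - lam i) hjmem).symm
      rw [hv]
      dsimp only
      rw [this, (Finset.erase_sdiff_comm (Finset.Icc 1 p) I j).symm, ← hu]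
      ring
    rw [Finset.sum_congr rfl this, ← Finset.mul_sum,
      ← Finset.prod_add lam (fun i => 1 - lam i) u]
    simp
  have hsplit := Finset.sum_filter_add_sum_filter_not
    ((Finset.Icc 1 p).powerset) (fun I => j ∈ I) v
  unfold coordWeight
  have : ∑ I ∈ (Finset.Icc 1 p).powerset.filter (fun I => j ∈ I), v I = lam j := by
    rw [htot] at hsplit
    rw [hnot] at hsplit
    linarith
  exact this

lemma rhoMA_eq (n p : ℕ) (σ2 : ℝ) (hσ : 0 ≤ σ2) (θ : ℕ → ℝ) :
    rhoMA n p σ2 θ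
      = ∑ j ∈ Finset.Icc 1 p, θ j ^ 2 * (σ2 / n) / (θ j ^ 2 + σ2 / n) := by
  classical
  have hs : (0:ℝ) ≤ σ2 / n := by positivity
  have hlb : ∀ r ∈ {r : ℝ | ∃ v : Finset ℕ → ℝ, IsSubsetWeight p v ∧ r = subsetMARisk n p σ2 θ v},
      ∑ j ∈ Finset.Icc 1 p, θ j ^ 2 * (σ2 / n) / (θ j ^ 2 + σ2 / n) ≤ r := by
    rintro r ⟨v, hv, rfl⟩
    refine Finset.sum_le_sum fun j _ => ?_
    rw [mul_div_right_comm σ2 _ (n:ℝ)]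
    exact quad_lower _ _ _ (sq_nonneg _) hs
  set lam : ℕ → ℝ := fun j => θ j ^ 2 / (θ j ^ 2 + σ2 / n) with hlam
  set v : Finset ℕ → ℝ :=
    fun I => (∏ i ∈ I, lam i) * ∏ i ∈ Finset.Icc 1 p \ I, (1 - lam i) with hv
  have hlam0 : ∀ i, 0 ≤ lam i := fun i => div_nonneg (sq_nonneg _) (by positivity)
  have hlam1 : ∀ i, lam i ≤ 1 := fun i =>
    div_le_one_of_le₀ (le_add_of_nonneg_right hs) (by positivity)
  have hw : IsSubsetWeight p v := by
    constructor
    · intro I _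
      exact mul_nonneg (Finset.prod_nonneg fun i _ => hlam0 i)
        (Finset.prod_nonneg fun i _ => by linarith [hlam1 i])
    · rw [← Finset.prod_add lam (fun i => 1 - lam i) (Finset.Icc 1 p)]
      simp
  have hmem : ∑ j ∈ Finset.Icc 1 p, θ j ^ 2 * (σ2 / n) / (θ j ^ 2 + σ2 / n)
      ∈ {r : ℝ | ∃ v : Finset ℕ → ℝ, IsSubsetWeight p v ∧ r = subsetMARisk n p σ2 θ v} := by
    refine ⟨v, hw, ?_⟩
    unfold subsetMARisk
    refine Finset.sum_congr rfl fun j hj => ?_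
    rw [hv, coordWeight_prod p lam j hj, mul_div_right_comm σ2 _ (n:ℝ), hlam]
    exact (lam_eq _ _ (sq_nonneg _) hs).symm
  exact le_antisymm (csInf_le ⟨_, hlb⟩ hmem) (le_csInf ⟨_, hmem⟩ hlb)


lemma tail_bound (a : ℕ → ℝ) (hpos : ∀ l, 1 ≤ l → 0 < a l)
    (hmono : ∀ i j : ℕ, 1 ≤ i → i ≤ j → a j ≤ a i)
    (κ ν C : ℝ) (hκ : 1 < κ) (hν0 : 0 ≤ ν) (hC : 0 ≤ C)
    (L : ℕ) (hL1 : 1 ≤ L) (hLκ : 1 ≤ (κ - 1) * ((L:ℝ) + 1))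
    (hcond : ∀ l : ℕ, L ≤ l → a (⌊κ * (l:ℝ)⌋₊) ≤ ν * a l)
    (hrec : ∀ m : ℕ, L ≤ m →
      (κ - 1) * ((m:ℝ) + 1) + C * ν ^ 2 * (κ * ((m:ℝ) + 1) - 1) ≤ C * (m:ℝ)) :
    ∀ k m P : ℕ, L ≤ m → P ≤ m + k →
      ∑ j ∈ Finset.Icc (m + 1) P, a j ^ 2 ≤ C * m * a (m + 1) ^ 2 := by
  intro k
  induction k using Nat.strong_induction_on with
  | _ k IH =>
  intro m P hm hP
  have hm1 : 1 ≤ m := le_trans hL1 hm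
  have hLm : (κ - 1) * ((m:ℝ) + 1) ≥ 1 := by
    have : ((L:ℝ) + 1) ≤ ((m:ℝ) + 1) := by
      have := (Nat.cast_le (α := ℝ)).2 hm; linarith
    nlinarith
  have hfl : m + 2 ≤ ⌊κ * ((m:ℝ) + 1)⌋₊ := by
    apply Nat.le_floor
    push_cast
    nlinarith
  set m' := ⌊κ * ((m:ℝ) + 1)⌋₊ - 1 with hm'def
  have hm'1 : m + 1 ≤ m' := by omega
  have hm'succ : m' + 1 = ⌊κ * ((m:ℝ) + 1)⌋₊ := by omega
  have hfloor_le : (⌊κ * ((m:ℝ) + 1)⌋₊ : ℝ) ≤ κ * ((m:ℝ) + 1) :=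
    Nat.floor_le (by positivity)
  have hm'le : (m' : ℝ) ≤ κ * ((m:ℝ) + 1) - 1 := by
    have : ((m' : ℕ) : ℝ) = (⌊κ * ((m:ℝ) + 1)⌋₊ : ℝ) - 1 := by
      rw [hm'def, Nat.cast_sub (by omega)]; norm_num
    linarith
  have hκm1 : (1:ℝ) ≤ κ * ((m:ℝ) + 1) - 1 := by nlinarith
  have hchunk : ∀ Q : ℕ, ∑ j ∈ Finset.Icc (m + 1) Q, a j ^ 2
      ≤ ((Q - m : ℕ) : ℝ) * a (m + 1) ^ 2 := by
    intro Q
    refine le_trans (Finset.sum_le_card_nsmul _ _ (a (m + 1) ^ 2) fun j hj => ?_) ?_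
    · rw [Finset.mem_Icc] at hj
      exact pow_le_pow_left₀ (le_of_lt (hpos j (by omega))) (hmono (m + 1) j (by omega) hj.1) 2
    · rw [Nat.card_Icc, nsmul_eq_mul]
      have : Q + 1 - (m + 1) = Q - m := by omega
      rw [this]
  have hbase : ∀ Q : ℕ, Q ≤ m' → ∑ j ∈ Finset.Icc (m + 1) Q, a j ^ 2
      ≤ (κ - 1) * ((m:ℝ) + 1) * a (m + 1) ^ 2 := by
    intro Q hQ
    refine le_trans (hchunk Q) (mul_le_mul_of_nonneg_right ?_ (sq_nonneg _))
    have h1 : ((Q - m : ℕ) : ℝ) ≤ ((m' - m : ℕ) : ℝ) :=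
      Nat.cast_le.2 (Nat.sub_le_sub_right hQ m)
    have h2 : ((m' - m : ℕ) : ℝ) = (m' : ℝ) - m := by
      rw [Nat.cast_sub (by omega)]
    linarith
  by_cases hPm' : P ≤ m'
  · refine le_trans (hbase P hPm') (mul_le_mul_of_nonneg_right ?_ (sq_nonneg _))
    have := hrec m hm
    nlinarith [mul_nonneg (mul_nonneg hC (sq_nonneg ν)) (by linarith : (0:ℝ) ≤ κ * ((m:ℝ) + 1) - 1)]
  · push_neg at hPm'
    have hIcc : ∀ b c : ℕ, Finset.Icc (b + 1) c = Finset.Ioc b c := fun b c =>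
      Finset.Icc_add_one_left_eq_Ioc b c
    have hsplit := Finset.sum_Ioc_consecutive (f := fun j => a j ^ 2)
      (le_of_lt (show m < m' by omega)) (le_of_lt hPm')
    have hsecond : ∑ j ∈ Finset.Icc (m' + 1) P, a j ^ 2 ≤ C * m' * a (m' + 1) ^ 2 := by
      refine IH (P - m') ?_ m' P (by omega) (by omega)
      omega
    have hratio : a (m' + 1) ≤ ν * a (m + 1) := by
      have := hcond (m + 1) (by omega)
      rw [hm'succ]
      convert this using 3
      push_cast
      ring
    have hsq : a (m' + 1) ^ 2 ≤ ν ^ 2 * a (m + 1) ^ 2 := by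
      have h0 : 0 ≤ a (m' + 1) := le_of_lt (hpos _ (by omega))
      nlinarith [hpos (m + 1) (by omega)]
    have hsecond2 : ∑ j ∈ Finset.Icc (m' + 1) P, a j ^ 2
        ≤ C * (κ * ((m:ℝ) + 1) - 1) * ν ^ 2 * a (m + 1) ^ 2 := by
      refine le_trans hsecond ?_
      have h1 : C * (m':ℝ) * a (m' + 1) ^ 2 ≤ C * (m':ℝ) * (ν ^ 2 * a (m + 1) ^ 2) :=
        mul_le_mul_of_nonneg_left hsq (by positivity)
      have h2 : C * (m':ℝ) * (ν ^ 2 * a (m + 1) ^ 2)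
          ≤ C * (κ * ((m:ℝ) + 1) - 1) * (ν ^ 2 * a (m + 1) ^ 2) := by
        refine mul_le_mul_of_nonneg_right ?_ (by positivity)
        exact mul_le_mul_of_nonneg_left hm'le hC
      calc C * (m':ℝ) * a (m' + 1) ^ 2 ≤ C * (m':ℝ) * (ν ^ 2 * a (m + 1) ^ 2) := h1
        _ ≤ C * (κ * ((m:ℝ) + 1) - 1) * (ν ^ 2 * a (m + 1) ^ 2) := h2
        _ = C * (κ * ((m:ℝ) + 1) - 1) * ν ^ 2 * a (m + 1) ^ 2 := by ring
    have hfirst : ∑ j ∈ Finset.Icc (m + 1) m', a j ^ 2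
        ≤ (κ - 1) * ((m:ℝ) + 1) * a (m + 1) ^ 2 := hbase m' le_rfl
    have htotal : ∑ j ∈ Finset.Icc (m + 1) P, a j ^ 2
        = ∑ j ∈ Finset.Icc (m + 1) m', a j ^ 2 + ∑ j ∈ Finset.Icc (m' + 1) P, a j ^ 2 := by
      rw [hIcc, hIcc, hIcc, ← hsplit]
    rw [htotal]
    have := hrec m hm
    nlinarith [sq_nonneg (a (m + 1))]


lemma half_core (s : ℝ) (hs : 0 ≤ s) (P : ℕ) (a : ℕ → ℝ) :
    ∑ j ∈ Finset.Icc 1 P, (min (a j ^ 2) s - a j ^ 2 * s / (a j ^ 2 + s))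
      ≤ (1/2) * ∑ j ∈ Finset.Icc 1 P, min (a j ^ 2) s := by
  rw [Finset.mul_sum]
  refine Finset.sum_le_sum fun j _ => ?_
  have := min_sub_le_half (a j ^ 2) s (sq_nonneg _) hs
  linarith

set_option maxHeartbeats 1000000 in
lemma lower_core (a : ℕ → ℝ) (hpos : ∀ l, 1 ≤ l → 0 < a l)
    (amono : ∀ i j : ℕ, 1 ≤ i → i ≤ j → a j ≤ a i)
    (κ δ C s : ℝ) (L P Mn : ℕ)
    (hκ : 1 < κ) (hδ0 : 0 < δ) (hδ1 : δ ≤ 1) (hC0 : 0 ≤ C) (hs : 0 < s)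
    (hL1 : 1 ≤ L) (hM1 : 1 ≤ Mn) (hMP : Mn ≤ P)
    (hML : κ * (L:ℝ) ≤ (Mn:ℝ)) (hMκ : 1 ≤ (κ - 1) * (Mn:ℝ))
    (hcondδ : ∀ l : ℕ, L ≤ l → δ * a l ≤ a ⌊κ * (l:ℝ)⌋₊)
    (htailb : ∑ j ∈ Finset.Icc (Mn + 1) P, a j ^ 2 ≤ C * Mn * a (Mn + 1) ^ 2)
    (hMin : ∀ j, 1 ≤ j → j ≤ Mn → s ≤ a j ^ 2)
    (hMout : ∀ j, Mn < j → j ≤ P → a j ^ 2 < s)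
    (haP : a P ^ 2 ≤ s) :
    ((κ - 1) / κ * (δ ^ 4 / (1 + δ ^ 4)) / (1 + C)) * (∑ j ∈ Finset.Icc 1 P, min (a j ^ 2) s)
      ≤ ∑ j ∈ Finset.Icc 1 P, (min (a j ^ 2) s - a j ^ 2 * s / (a j ^ 2 + s)) := by
  have hκ0 : (0:ℝ) < κ := by linarith
  have hLM : L ≤ Mn := by
    have h1 : (L:ℝ) ≤ κ * L := le_mul_of_one_le_left (by positivity) (le_of_lt hκ)
    exact Nat.cast_le.1 (le_trans h1 hML)
  set l0 := ⌈(Mn:ℝ)/κ⌉₊ with hl0def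
  have hl01 : 1 ≤ l0 := Nat.one_le_ceil_iff.2 (by positivity)
  have hl0M : l0 ≤ Mn := by
    rw [hl0def]
    refine Nat.ceil_le.2 ?_
    rw [div_le_iff₀ hκ0]
    nlinarith [Nat.cast_nonneg (α := ℝ) Mn]
  have hl0L : L ≤ l0 := by
    have h1 : (L:ℝ) ≤ (Mn:ℝ)/κ := by
      rw [le_div_iff₀ hκ0]; nlinarith
    exact Nat.cast_le.1 (le_trans h1 (Nat.le_ceil _))
  have hfl0 : Mn ≤ ⌊κ * (l0:ℝ)⌋₊ := by
    apply Nat.le_floor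
    have h1 := Nat.le_ceil ((Mn:ℝ)/κ)
    rw [← hl0def] at h1
    calc (Mn:ℝ) = κ * ((Mn:ℝ)/κ) := by field_simp
      _ ≤ κ * l0 := by nlinarith
  have hδ2 : (0:ℝ) < δ ^ 2 := by positivity
  have haM : a Mn ^ 2 ≤ s / δ ^ 2 := by
    rcases eq_or_lt_of_le hMP with hEq | hLt
    · rw [hEq]
      rw [le_div_iff₀ hδ2]
      have hδsq : δ ^ 2 ≤ 1 := by nlinarith
      nlinarith [mul_nonneg (by linarith : (0:ℝ) ≤ 1 - δ ^ 2) (sq_nonneg (a P))]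
    · have h2 : a (Mn + 1) ^ 2 < s := hMout (Mn + 1) (by omega) hLt
      have h3 : δ * a Mn ≤ a ⌊κ * (Mn:ℝ)⌋₊ := hcondδ Mn hLM
      have h4 : Mn + 1 ≤ ⌊κ * (Mn:ℝ)⌋₊ := by
        apply Nat.le_floor; push_cast; nlinarith
      have h5 : a ⌊κ * (Mn:ℝ)⌋₊ ≤ a (Mn + 1) := amono (Mn + 1) _ (by omega) h4
      have h6 : 0 < a Mn := hpos _ hM1
      rw [le_div_iff₀ hδ2]
      have h7 : δ * a Mn ≤ a (Mn + 1) := le_trans h3 h5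
      have h8 := mul_self_le_mul_self (le_of_lt (mul_pos hδ0 h6)) h7
      nlinarith [h8, h2]
  set c0 := δ ^ 4 / (1 + δ ^ 4) with hc0def
  have hc0pos : 0 < c0 := by rw [hc0def]; positivity
  have hterm : ∀ j ∈ Finset.Icc l0 Mn,
      c0 * s ≤ min (a j ^ 2) s - a j ^ 2 * s / (a j ^ 2 + s) := by
    intro j hj
    rw [Finset.mem_Icc] at hj
    have hj1 : 1 ≤ j := le_trans hl01 hj.1
    have hts : s ≤ a j ^ 2 := hMin j hj1 hj.2
    have htub : a j ^ 2 ≤ s / δ ^ 4 := by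
      have h1 : a j ≤ a l0 := amono l0 j hl01 hj.1
      have h2 : δ * a l0 ≤ a ⌊κ * (l0:ℝ)⌋₊ := hcondδ l0 hl0L
      have h3 : a ⌊κ * (l0:ℝ)⌋₊ ≤ a Mn := amono Mn _ hM1 hfl0
      have h4 : 0 < a j := hpos _ hj1
      have h5 : 0 < a l0 := hpos _ hl01
      have hδ4 : (0:ℝ) < δ ^ 4 := by positivity
      rw [le_div_iff₀ hδ4]
      have h7 : δ * a j ≤ a Mn := by
        nlinarith [mul_le_mul_of_nonneg_left h1 (le_of_lt hδ0)]
      have h8 := mul_self_le_mul_self (le_of_lt (mul_pos hδ0 h4)) h7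
      have h9 := (le_div_iff₀ hδ2).1 haM
      calc a j ^ 2 * δ ^ 4 = δ ^ 2 * ((δ * a j) * (δ * a j)) := by ring
        _ ≤ δ ^ 2 * (a Mn * a Mn) := by nlinarith [h8]
        _ ≤ s := by nlinarith [h9]
    have htpos : (0:ℝ) < a j ^ 2 + s := by positivity
    rw [min_eq_right hts]
    have hid : s - a j ^ 2 * s / (a j ^ 2 + s) = s ^ 2 / (a j ^ 2 + s) := by
      field_simp; ring
    rw [hid]
    have hden : a j ^ 2 + s ≤ s / δ ^ 4 + s := by linarith
    have h9 : s ^ 2 / (s / δ ^ 4 + s) ≤ s ^ 2 / (a j ^ 2 + s) :=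
      div_le_div_of_nonneg_left (by positivity) htpos hden
    refine le_trans (le_of_eq ?_) h9
    rw [hc0def]
    have h10 : (1:ℝ) + δ ^ 4 ≠ 0 := by positivity
    have h11 : (δ:ℝ) ^ 4 ≠ 0 := by positivity
    have h12 : s / δ ^ 4 + s ≠ 0 := ne_of_gt (by positivity)
    field_simp
  have hsub : Finset.Icc l0 Mn ⊆ Finset.Icc 1 P := by
    intro x hx; rw [Finset.mem_Icc] at *; omega
  have hD1 : ∑ j ∈ Finset.Icc l0 Mn, (min (a j ^ 2) s - a j ^ 2 * s / (a j ^ 2 + s))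
      ≤ ∑ j ∈ Finset.Icc 1 P, (min (a j ^ 2) s - a j ^ 2 * s / (a j ^ 2 + s)) :=
    Finset.sum_le_sum_of_subset_of_nonneg hsub
      (fun j _ _ => min_sub_nonneg _ _ (sq_nonneg _) (le_of_lt hs))
  have hcard : (Mn:ℝ) * (κ - 1) / κ ≤ ((Finset.Icc l0 Mn).card : ℝ) := by
    rw [Nat.card_Icc]
    have h1 : ((Mn + 1 - l0 : ℕ) : ℝ) = (Mn:ℝ) + 1 - l0 := by
      rw [Nat.cast_sub (by omega)]; push_cast; ring
    rw [h1]
    have h2 : (l0:ℝ) < (Mn:ℝ)/κ + 1 := Nat.ceil_lt_add_one (by positivity)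
    have h3 : (Mn:ℝ) * (κ - 1) / κ = Mn - Mn/κ := by field_simp
    rw [h3]
    linarith
  have hD2 : (Mn:ℝ) * (κ - 1) / κ * (c0 * s)
      ≤ ∑ j ∈ Finset.Icc l0 Mn, (min (a j ^ 2) s - a j ^ 2 * s / (a j ^ 2 + s)) := by
    refine le_trans ?_ (Finset.card_nsmul_le_sum _ _ _ hterm)
    rw [nsmul_eq_mul]
    exact mul_le_mul_of_nonneg_right hcard (by positivity)
  have hhead : ∑ j ∈ Finset.Icc 1 Mn, min (a j ^ 2) s = (Mn:ℝ) * s := by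
    rw [Finset.sum_congr rfl (fun j hj => min_eq_right
      (hMin j (Finset.mem_Icc.1 hj).1 (Finset.mem_Icc.1 hj).2)),
      Finset.sum_const, Nat.card_Icc, nsmul_eq_mul]
    norm_num
  have htailS : ∑ j ∈ Finset.Icc (Mn + 1) P, min (a j ^ 2) s ≤ C * Mn * s := by
    have he : ∑ j ∈ Finset.Icc (Mn + 1) P, min (a j ^ 2) s
        = ∑ j ∈ Finset.Icc (Mn + 1) P, a j ^ 2 := by
      refine Finset.sum_congr rfl fun j hj => ?_
      rw [Finset.mem_Icc] at hj
      exact min_eq_left (le_of_lt (hMout j (by omega) hj.2))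
    rw [he]
    rcases eq_or_lt_of_le hMP with hEq | hLt
    · rw [hEq, Finset.Icc_eq_empty (by omega)]
      simp
      positivity
    · have h2 : a (Mn + 1) ^ 2 ≤ s := le_of_lt (hMout (Mn + 1) (by omega) hLt)
      refine le_trans htailb ?_
      exact mul_le_mul_of_nonneg_left h2 (by positivity)
  have hIoc : ∀ b c : ℕ, Finset.Icc (b + 1) c = Finset.Ioc b c := fun b c =>
    Finset.Icc_add_one_left_eq_Ioc b c
  have hsplit : ∑ j ∈ Finset.Icc 1 P, min (a j ^ 2) s
      = ∑ j ∈ Finset.Icc 1 Mn, min (a j ^ 2) s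
        + ∑ j ∈ Finset.Icc (Mn + 1) P, min (a j ^ 2) s := by
    rw [show Finset.Icc 1 P = Finset.Ioc 0 P from hIoc 0 P,
      show Finset.Icc 1 Mn = Finset.Ioc 0 Mn from hIoc 0 Mn, hIoc Mn P]
    exact (Finset.sum_Ioc_consecutive _ (Nat.zero_le _) hMP).symm
  have hSle : ∑ j ∈ Finset.Icc 1 P, min (a j ^ 2) s ≤ (1 + C) * ((Mn:ℝ) * s) := by
    rw [hsplit, hhead]
    have he : (1 + C) * ((Mn:ℝ) * s) = (Mn:ℝ) * s + C * Mn * s := by ring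
    linarith
  have hC1 : (0:ℝ) < 1 + C := by linarith
  have hc10 : (0:ℝ) ≤ (κ - 1) / κ * c0 / (1 + C) :=
    div_nonneg (mul_nonneg (div_nonneg (by linarith) (le_of_lt hκ0)) (le_of_lt hc0pos))
      (by linarith)
  calc ((κ - 1) / κ * c0 / (1 + C)) * (∑ j ∈ Finset.Icc 1 P, min (a j ^ 2) s)
      ≤ ((κ - 1) / κ * c0 / (1 + C)) * ((1 + C) * ((Mn:ℝ) * s)) :=
        mul_le_mul_of_nonneg_left hSle hc10
    _ = (Mn:ℝ) * (κ - 1) / κ * (c0 * s) := by field_simp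
    _ ≤ _ := le_trans hD2 hD1



set_option maxHeartbeats 1000000 in
lemma littleo_core (a : ℕ → ℝ) (hpos : ∀ l, 1 ≤ l → 0 < a l)
    (amono : ∀ i j : ℕ, 1 ≤ i → i ≤ j → a j ≤ a i)
    (ε s : ℝ) (L P Mn : ℕ)
    (hε0 : 0 < ε) (hε1 : ε ≤ 1) (hs : 0 < s)
    (hL1 : 1 ≤ L) (hM1 : 1 ≤ Mn) (hMP : Mn ≤ P)
    (hMbig : (L:ℝ) + 1 ≤ ε * (Mn:ℝ))
    (hcond : ∀ l : ℕ, L ≤ l → a ⌊(1 + ε) * (l:ℝ)⌋₊ ≤ ε * a l)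
    (hMin : ∀ j, 1 ≤ j → j ≤ Mn → s ≤ a j ^ 2)
    (hMout : ∀ j, Mn < j → j ≤ P → a j ^ 2 < s) :
    ∑ j ∈ Finset.Icc 1 P, (min (a j ^ 2) s - a j ^ 2 * s / (a j ^ 2 + s))
      ≤ 5 * ε * ∑ j ∈ Finset.Icc 1 P, min (a j ^ 2) s := by
  have hε0' : (0:ℝ) < 1 + ε := by linarith
  have hLM : L ≤ Mn := by
    have : (L:ℝ) ≤ (Mn:ℝ) := by nlinarith [Nat.cast_nonneg (α := ℝ) Mn]
    exact Nat.cast_le.1 this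
  have hIoc : ∀ b c : ℕ, Finset.Icc (b + 1) c = Finset.Ioc b c := fun b c =>
    Finset.Icc_add_one_left_eq_Ioc b c
  have hsplit : ∀ f : ℕ → ℝ, ∑ j ∈ Finset.Icc 1 P, f j
      = ∑ j ∈ Finset.Icc 1 Mn, f j + ∑ j ∈ Finset.Icc (Mn + 1) P, f j := by
    intro f
    rw [show Finset.Icc 1 P = Finset.Ioc 0 P from hIoc 0 P,
      show Finset.Icc 1 Mn = Finset.Ioc 0 Mn from hIoc 0 Mn, hIoc Mn P]
    exact (Finset.sum_Ioc_consecutive _ (Nat.zero_le _) hMP).symm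
  have hheadS : ∑ j ∈ Finset.Icc 1 Mn, min (a j ^ 2) s = (Mn:ℝ) * s := by
    rw [Finset.sum_congr rfl (fun j hj => min_eq_right
      (hMin j (Finset.mem_Icc.1 hj).1 (Finset.mem_Icc.1 hj).2)),
      Finset.sum_const, Nat.card_Icc, nsmul_eq_mul]
    norm_num
  have htailS : ∑ j ∈ Finset.Icc (Mn + 1) P, min (a j ^ 2) s
      = ∑ j ∈ Finset.Icc (Mn + 1) P, a j ^ 2 := by
    refine Finset.sum_congr rfl fun j hj => ?_
    rw [Finset.mem_Icc] at hj
    exact min_eq_left (le_of_lt (hMout j (by omega) hj.2))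
  have hT0 : (0:ℝ) ≤ ∑ j ∈ Finset.Icc (Mn + 1) P, a j ^ 2 :=
    Finset.sum_nonneg fun j _ => sq_nonneg _
  -- head bound
  set l1 := ⌊(Mn:ℝ) / (1 + ε)⌋₊ with hl1def
  have hl1M : l1 ≤ Mn := by
    have h1 : (Mn:ℝ) / (1 + ε) ≤ (Mn:ℝ) :=
      div_le_self (Nat.cast_nonneg _) (by linarith)
    have := Nat.floor_mono h1
    rwa [Nat.floor_natCast] at this
  have hterm_head : ∀ j ∈ Finset.Icc 1 Mn,
      min (a j ^ 2) s - a j ^ 2 * s / (a j ^ 2 + s)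
        ≤ if L ≤ j ∧ j ≤ l1 then ε ^ 2 * s else s := by
    intro j hj
    rw [Finset.mem_Icc] at hj
    have hts : s ≤ a j ^ 2 := hMin j hj.1 hj.2
    have hj0 : 0 < a j := hpos j hj.1
    have htpos : (0:ℝ) < a j ^ 2 + s := by positivity
    have hh0 : (0:ℝ) ≤ a j ^ 2 * s / (a j ^ 2 + s) := by positivity
    rw [min_eq_right hts]
    split_ifs with hcase
    · obtain ⟨hjL, hjl1⟩ := hcase
      have hj1R : (1:ℝ) ≤ (j:ℝ) := by exact_mod_cast hj.1
      have hfl : ⌊(1 + ε) * (j:ℝ)⌋₊ ≤ Mn := by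
        have h1 : (1 + ε) * (j:ℝ) ≤ (1 + ε) * l1 := by
          have : (j:ℝ) ≤ (l1:ℝ) := by exact_mod_cast hjl1
          nlinarith
        have h2 : (1 + ε) * (l1:ℝ) ≤ (Mn:ℝ) := by
          have h3 : (l1:ℝ) ≤ (Mn:ℝ) / (1 + ε) := Nat.floor_le (by positivity)
          have h4 := (le_div_iff₀ hε0').1 h3
          linarith
        have := Nat.floor_mono (le_trans h1 h2)
        rwa [Nat.floor_natCast] at this
      have h1fl : 1 ≤ ⌊(1 + ε) * (j:ℝ)⌋₊ := by
        apply Nat.le_floor; push_cast; nlinarith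
      have h3 : a Mn ≤ a ⌊(1 + ε) * (j:ℝ)⌋₊ := amono _ Mn h1fl hfl
      have h4 : a Mn ≤ ε * a j := le_trans h3 (hcond j hjL)
      have h5 : s ≤ a Mn ^ 2 := hMin Mn hM1 le_rfl
      have h6 : s ≤ ε ^ 2 * a j ^ 2 := by
        have h7 := mul_self_le_mul_self (le_of_lt (hpos Mn hM1)) h4
        nlinarith
      have hid : s - a j ^ 2 * s / (a j ^ 2 + s) = s ^ 2 / (a j ^ 2 + s) := by
        field_simp; ring
      rw [hid]
      have h7 : s ^ 2 / (a j ^ 2 + s) ≤ s ^ 2 / (a j ^ 2) :=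
        div_le_div_of_nonneg_left (sq_nonneg _) (by positivity) (by linarith)
      refine le_trans h7 ?_
      rw [div_le_iff₀ (by positivity : (0:ℝ) < a j ^ 2)]
      nlinarith
    · linarith
  have hl1cast : (Mn:ℝ) - (l1:ℝ) ≤ ε * (Mn:ℝ) + 1 := by
    have h1 : (Mn:ℝ) / (1 + ε) < (l1:ℝ) + 1 := Nat.lt_floor_add_one _
    have h2 : (Mn:ℝ) - (Mn:ℝ) / (1 + ε) ≤ ε * (Mn:ℝ) := by
      rw [div_eq_mul_inv]
      have h3 : (Mn:ℝ) * (1 + ε)⁻¹ = (Mn:ℝ) - (Mn:ℝ) * ε * (1 + ε)⁻¹ := by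
        field_simp
        ring
      rw [h3]
      have h4 : (0:ℝ) ≤ (Mn:ℝ) * ε := by positivity
      have h5 : (Mn:ℝ) * ε * (1 + ε)⁻¹ ≤ (Mn:ℝ) * ε := by
        refine mul_le_of_le_one_right h4 ?_
        rw [inv_le_one_iff₀]
        right
        linarith
      linarith
    linarith
  have hheadD : ∑ j ∈ Finset.Icc 1 Mn, (min (a j ^ 2) s - a j ^ 2 * s / (a j ^ 2 + s))
      ≤ 3 * ε * ((Mn:ℝ) * s) := by
    refine le_trans (Finset.sum_le_sum hterm_head) ?_
    rw [Finset.sum_ite, Finset.sum_const, Finset.sum_const, nsmul_eq_mul, nsmul_eq_mul]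
    have hcard1 : (((Finset.Icc 1 Mn).filter (fun j => L ≤ j ∧ j ≤ l1)).card : ℝ)
        ≤ (Mn:ℝ) := by
      have h1 := Finset.card_filter_le (Finset.Icc 1 Mn) (fun j => L ≤ j ∧ j ≤ l1)
      rw [Nat.card_Icc] at h1
      exact_mod_cast le_trans h1 (by omega)
    have hcard2 : (((Finset.Icc 1 Mn).filter (fun j => ¬(L ≤ j ∧ j ≤ l1))).card : ℝ)
        ≤ ((L:ℝ) - 1) + ((Mn:ℝ) - (l1:ℝ)) := by
      have hsub : (Finset.Icc 1 Mn).filter (fun j => ¬(L ≤ j ∧ j ≤ l1))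
          ⊆ Finset.Icc 1 (L - 1) ∪ Finset.Icc (l1 + 1) Mn := by
        intro x hx
        rw [Finset.mem_filter, Finset.mem_Icc] at hx
        rw [Finset.mem_union, Finset.mem_Icc, Finset.mem_Icc]
        omega
      have h1 := le_trans (Finset.card_le_card hsub)
        (Finset.card_union_le (Finset.Icc 1 (L - 1)) (Finset.Icc (l1 + 1) Mn))
      rw [Nat.card_Icc, Nat.card_Icc] at h1
      have h2 : (L - 1 + 1 - 1) + (Mn + 1 - (l1 + 1)) = (L - 1) + (Mn - l1) := by omega
      rw [h2] at h1
      have h3 : (((L - 1) + (Mn - l1) : ℕ) : ℝ) = ((L:ℝ) - 1) + ((Mn:ℝ) - (l1:ℝ)) := by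
        rw [Nat.cast_add, Nat.cast_sub hL1, Nat.cast_sub hl1M]
        push_cast
        ring
      calc (((Finset.Icc 1 Mn).filter (fun j => ¬(L ≤ j ∧ j ≤ l1))).card : ℝ)
          ≤ (((L - 1) + (Mn - l1) : ℕ) : ℝ) := by exact_mod_cast h1
        _ = _ := h3
    have hε2s : (0:ℝ) ≤ ε ^ 2 * s := by positivity
    have hb1 : (((Finset.Icc 1 Mn).filter (fun j => L ≤ j ∧ j ≤ l1)).card : ℝ) * (ε ^ 2 * s)
        ≤ (Mn:ℝ) * (ε ^ 2 * s) := mul_le_mul_of_nonneg_right hcard1 hε2s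
    have hb2 : (((Finset.Icc 1 Mn).filter (fun j => ¬(L ≤ j ∧ j ≤ l1))).card : ℝ) * s
        ≤ (((L:ℝ) - 1) + ((Mn:ℝ) - (l1:ℝ))) * s :=
      mul_le_mul_of_nonneg_right hcard2 (le_of_lt hs)
    have hMn0 : (0:ℝ) ≤ (Mn:ℝ) := Nat.cast_nonneg _
    nlinarith [mul_le_mul_of_nonneg_right hl1cast (le_of_lt hs),
      mul_le_mul_of_nonneg_right hMbig (le_of_lt hs),
      mul_nonneg (mul_nonneg (by nlinarith : (0:ℝ) ≤ ε - ε ^ 2) hMn0) (le_of_lt hs)]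
  -- tail bound
  have htailD : ∑ j ∈ Finset.Icc (Mn + 1) P, (min (a j ^ 2) s - a j ^ 2 * s / (a j ^ 2 + s))
      ≤ 2 * ε * ((Mn:ℝ) * s) + ε ^ 2 * ∑ j ∈ Finset.Icc (Mn + 1) P, a j ^ 2 := by
    rcases eq_or_lt_of_le hMP with hEq | hLt
    · rw [hEq, Finset.Icc_eq_empty (by omega)]
      simp
      positivity
    · have haM1 : a (Mn + 1) ^ 2 < s := hMout (Mn + 1) (by omega) hLt
      set r := ⌊(1 + ε) * ((Mn:ℝ) + 1)⌋₊ with hrdef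
      have hrM : Mn + 1 ≤ r := by
        apply Nat.le_floor; push_cast; nlinarith [Nat.cast_nonneg (α := ℝ) Mn]
      have hterm_tail : ∀ j ∈ Finset.Icc (Mn + 1) P,
          min (a j ^ 2) s - a j ^ 2 * s / (a j ^ 2 + s)
            ≤ if j < r then s else ε ^ 2 * a j ^ 2 := by
        intro j hj
        rw [Finset.mem_Icc] at hj
        have hj1 : 1 ≤ j := by omega
        have ht : a j ^ 2 < s := hMout j (by omega) hj.2
        have hj0 : 0 < a j := hpos j hj1
        have htpos : (0:ℝ) < a j ^ 2 + s := by positivity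
        have hh0 : (0:ℝ) ≤ a j ^ 2 * s / (a j ^ 2 + s) := by positivity
        rw [min_eq_left (le_of_lt ht)]
        split_ifs with hcase
        · linarith
        · push_neg at hcase
          have h1 : a j ≤ a r := amono r j (by omega) hcase
          have h2 : a r ≤ ε * a (Mn + 1) := by
            have h3 := hcond (Mn + 1) (by omega)
            rw [hrdef]
            convert h3 using 3
            push_cast
            ring
          have h4 : a j ≤ ε * a (Mn + 1) := le_trans h1 h2
          have h5 := mul_self_le_mul_self (le_of_lt hj0) h4
          have h6 : a j ^ 2 ≤ ε ^ 2 * s := by nlinarith [hpos (Mn + 1) (by omega : 1 ≤ Mn + 1)]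
          have hid : a j ^ 2 - a j ^ 2 * s / (a j ^ 2 + s) = (a j ^ 2) ^ 2 / (a j ^ 2 + s) := by
            field_simp; ring
          rw [hid]
          have h7 : (a j ^ 2) ^ 2 / (a j ^ 2 + s) ≤ (a j ^ 2) ^ 2 / s :=
            div_le_div_of_nonneg_left (sq_nonneg _) hs (by nlinarith [sq_nonneg (a j)])
          refine le_trans h7 ?_
          rw [div_le_iff₀ hs]
          nlinarith [sq_nonneg (a j)]
      refine le_trans (Finset.sum_le_sum hterm_tail) ?_
      rw [Finset.sum_ite, Finset.sum_const, nsmul_eq_mul]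
      have hcard : (((Finset.Icc (Mn + 1) P).filter (fun j => j < r)).card : ℝ)
          ≤ 2 * ε * (Mn:ℝ) := by
        have hsub : (Finset.Icc (Mn + 1) P).filter (fun j => j < r)
            ⊆ Finset.Icc (Mn + 1) (r - 1) := by
          intro x hx
          rw [Finset.mem_filter, Finset.mem_Icc] at hx
          rw [Finset.mem_Icc]
          omega
        have h1 := Finset.card_le_card hsub
        rw [Nat.card_Icc] at h1
        have h2 : r - 1 + 1 - (Mn + 1) = r - 1 - Mn := by omega
        rw [h2] at h1
        have h3 : ((r - 1 - Mn : ℕ) : ℝ) = (r:ℝ) - 1 - (Mn:ℝ) := by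
          rw [Nat.cast_sub (by omega), Nat.cast_sub (by omega)]
          push_cast
          ring
        have h4 : (r:ℝ) ≤ (1 + ε) * ((Mn:ℝ) + 1) := Nat.floor_le (by positivity)
        have h5 : (1:ℝ) ≤ (Mn:ℝ) := by exact_mod_cast hM1
        calc (((Finset.Icc (Mn + 1) P).filter (fun j => j < r)).card : ℝ)
            ≤ ((r - 1 - Mn : ℕ) : ℝ) := by exact_mod_cast h1
          _ = (r:ℝ) - 1 - (Mn:ℝ) := h3
          _ ≤ 2 * ε * (Mn:ℝ) := by nlinarith
      have hsum2 : ∑ j ∈ (Finset.Icc (Mn + 1) P).filter (fun j => ¬ j < r), ε ^ 2 * a j ^ 2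
          ≤ ε ^ 2 * ∑ j ∈ Finset.Icc (Mn + 1) P, a j ^ 2 := by
        rw [← Finset.mul_sum]
        refine mul_le_mul_of_nonneg_left ?_ (by positivity)
        exact Finset.sum_le_sum_of_subset_of_nonneg (Finset.filter_subset _ _)
          (fun j _ _ => sq_nonneg _)
      have := mul_le_mul_of_nonneg_right hcard (le_of_lt hs)
      linarith
  rw [hsplit (fun j => min (a j ^ 2) s - a j ^ 2 * s / (a j ^ 2 + s)),
    hsplit (fun j => min (a j ^ 2) s), hheadS, htailS]
  have h5e : 5 * ε * ((Mn:ℝ) * s + ∑ j ∈ Finset.Icc (Mn + 1) P, a j ^ 2)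
      = 5 * ε * ((Mn:ℝ) * s) + 5 * ε * ∑ j ∈ Finset.Icc (Mn + 1) P, a j ^ 2 := by ring
  have hee : ε ^ 2 * ∑ j ∈ Finset.Icc (Mn + 1) P, a j ^ 2
      ≤ 5 * ε * ∑ j ∈ Finset.Icc (Mn + 1) P, a j ^ 2 := by
    refine mul_le_mul_of_nonneg_right ?_ hT0
    nlinarith
  rw [h5e]
  linarith

set_option maxHeartbeats 2000000 in
/-- Theorem 4 of the paper.  Let `(a_l)` be positive, non-increasing,
square-summable, `σ² > 0`, `p_n ≤ n` with `p_n → ∞` and `a_{p_n}² ≤ σ²/n` eventually.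
For each `n`, let `θ^{(n)} ∈ ℝ^{p_n}` be any vector whose absolute values form a permutation
of `(a_1, …, a_{p_n})`.  (i) Under Condition 3, `ρ_n^{MS} − ρ_n^{MA} ≍ ρ_n^{MS}`.
(ii) Under Condition 4, `ρ_n^{MS} − ρ_n^{MA} = o(ρ_n^{MS})`. -/
theorem stmt_8 (σ2 : ℝ) (hσ : 0 < σ2) (a : ℕ → ℝ)
    (hpos : ∀ l, 1 ≤ l → 0 < a l)
    (hmono : ∀ l, 1 ≤ l → a (l + 1) ≤ a l)
    (hsum : Summable fun l => a l ^ 2)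
    (p : ℕ → ℕ) (hp : ∀ n, p n ≤ n)
    (hpinf : Filter.Tendsto p Filter.atTop Filter.atTop)
    (htail : ∀ᶠ n in Filter.atTop, a (p n) ^ 2 ≤ σ2 / n)
    (θ : ℕ → ℕ → ℝ)
    (hperm : ∀ n, ((Finset.Icc 1 (p n)).val.map fun j => |θ n j|)
        = ((Finset.Icc 1 (p n)).val.map fun j => a j)) :
    (Condition3 a →
        AsympEquiv (fun n => rhoMS n (p n) σ2 (θ n) - rhoMA n (p n) σ2 (θ n))
          (fun n => rhoMS n (p n) σ2 (θ n)))
    ∧ (Condition4 a →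
        LittleO (fun n => rhoMS n (p n) σ2 (θ n) - rhoMA n (p n) σ2 (θ n))
          (fun n => rhoMS n (p n) σ2 (θ n))) := by
  classical
  have amono : ∀ i j : ℕ, 1 ≤ i → i ≤ j → a j ≤ a i := by
    intro i j hi hij
    induction j, hij using Nat.le_induction with
    | base => exact le_refl _
    | succ j hij ih => exact le_trans (hmono j (le_trans hi hij)) ih
  have hperm' : ∀ (n : ℕ) (f : ℝ → ℝ),
      ∑ j ∈ Finset.Icc 1 (p n), f |θ n j| = ∑ j ∈ Finset.Icc 1 (p n), f (a j) := by
    intro n f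
    have h2 := congrArg (fun m => (Multiset.map f m).sum) (hperm n)
    simp only [Multiset.map_map, Function.comp] at h2
    exact h2
  have hS : ∀ n : ℕ, rhoMS n (p n) σ2 (θ n)
      = ∑ j ∈ Finset.Icc 1 (p n), min (a j ^ 2) (σ2 / n) := by
    intro n
    rw [rhoMS_eq]
    rw [Finset.sum_congr rfl (fun j _ => by rw [← sq_abs (θ n j)])]
    exact hperm' n (fun x => min (x ^ 2) (σ2 / n))
  have hA : ∀ n : ℕ, rhoMA n (p n) σ2 (θ n)
      = ∑ j ∈ Finset.Icc 1 (p n), a j ^ 2 * (σ2 / n) / (a j ^ 2 + σ2 / n) := by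
    intro n
    rw [rhoMA_eq n (p n) σ2 (le_of_lt hσ) (θ n)]
    rw [Finset.sum_congr rfl (fun j _ => by rw [← sq_abs (θ n j)])]
    exact hperm' n (fun x => x ^ 2 * (σ2 / n) / (x ^ 2 + σ2 / n))
  have hD : ∀ n : ℕ, rhoMS n (p n) σ2 (θ n) - rhoMA n (p n) σ2 (θ n)
      = ∑ j ∈ Finset.Icc 1 (p n),
          (min (a j ^ 2) (σ2 / n) - a j ^ 2 * (σ2 / n) / (a j ^ 2 + σ2 / n)) := by
    intro n; rw [hS n, hA n, ← Finset.sum_sub_distrib]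
  set M : ℕ → ℕ := fun n => Nat.findGreatest (fun j => σ2 / n ≤ a j ^ 2) (p n) with hM
  have hMle : ∀ n, M n ≤ p n := fun n => Nat.findGreatest_le _
  have hMin : ∀ n : ℕ, ∀ j, 1 ≤ j → j ≤ M n → σ2 / n ≤ a j ^ 2 := by
    intro n j hj hjM
    have h0 : M n ≠ 0 := by omega
    have h1 : σ2 / n ≤ a (M n) ^ 2 :=
      Nat.findGreatest_of_ne_zero (rfl : Nat.findGreatest _ (p n) = M n) h0
    have h2 : a (M n) ≤ a j := amono j (M n) hj hjM
    nlinarith [hpos j hj, hpos (M n) (by omega : 1 ≤ M n)]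
  have hMout : ∀ n : ℕ, ∀ j, M n < j → j ≤ p n → a j ^ 2 < σ2 / n := by
    intro n j h1 h2
    by_contra hcon
    push_neg at hcon
    exact Nat.findGreatest_is_greatest h1 h2 hcon
  have hMtend : Filter.Tendsto M Filter.atTop Filter.atTop := by
    rw [Filter.tendsto_atTop]
    intro b
    set j := max b 1 with hj
    have hj1 : 1 ≤ j := le_max_right _ _
    have haj : 0 < a j ^ 2 := pow_pos (hpos j hj1) 2
    obtain ⟨N, hN⟩ := exists_nat_ge (σ2 / a j ^ 2)
    filter_upwards [hpinf.eventually_ge_atTop j, Filter.eventually_ge_atTop (max N 1)]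
      with n hn1 hn2
    have hn0 : (1:ℕ) ≤ n := le_trans (le_max_right _ _) hn2
    have hnN : (N:ℝ) ≤ n := by exact_mod_cast le_trans (le_max_left _ _) hn2
    have h3 : σ2 / n ≤ a j ^ 2 := by
      rw [div_le_iff₀ (by exact_mod_cast hn0 : (0:ℝ) < (n:ℝ))]
      have h4 : σ2 / a j ^ 2 ≤ (n:ℝ) := le_trans hN hnN
      rw [div_le_iff₀ haj] at h4
      linarith
    calc b ≤ j := le_max_left _ _
      _ ≤ M n := Nat.le_findGreatest hn1 h3
  constructor
  · -- part (i)
    intro hc3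
    obtain ⟨κ, δ, ν, hκ, hδ0, hδν, hν1, hκν, hev⟩ := hc3
    obtain ⟨L0, hL0⟩ := Filter.eventually_atTop.1 hev
    set L : ℕ := max L0 1 with hLdef
    have hL1 : 1 ≤ L := le_max_right _ _
    have hν0 : 0 < ν := lt_of_lt_of_le hδ0 hδν
    have hκ0 : (0:ℝ) < κ := by linarith
    have hcl : ∀ l : ℕ, L ≤ l →
        δ * a l ≤ a ⌊κ * (l:ℝ)⌋₊ ∧ a ⌊κ * (l:ℝ)⌋₊ ≤ ν * a l := by
      intro l hl
      have h1 := hL0 l (le_trans (le_max_left _ _) hl)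
      have hal : 0 < a l := hpos l (le_trans (le_max_right _ _) hl)
      constructor
      · have h2 := h1.1
        rw [le_div_iff₀ hal] at h2
        linarith
      · have h2 := h1.2
        rw [div_le_iff₀ hal] at h2
        linarith
    set q : ℝ := (1 + κ * ν ^ 2) / 2 with hq
    have hq1 : q < 1 := by rw [hq]; linarith
    have hqκ : κ * ν ^ 2 < q := by
      rw [hq]
      have : 0 < κ * ν ^ 2 := mul_pos hκ0 (pow_pos hν0 2)
      linarith
    set C : ℝ := 2 * (κ - 1) / (1 - q) with hC
    have hC0 : 0 ≤ C := div_nonneg (by linarith) (by linarith)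
    obtain ⟨m0', hm0'⟩ := exists_nat_ge (κ * ν ^ 2 / (q - κ * ν ^ 2))
    obtain ⟨L1', hL1'⟩ := exists_nat_ge (1 / (κ - 1))
    set m0 : ℕ := max (max m0' L1') L with hm0
    have hm0L : L ≤ m0 := le_max_right _ _
    have hm01 : 1 ≤ m0 := le_trans hL1 hm0L
    have hLκ : 1 ≤ (κ - 1) * ((m0:ℝ) + 1) := by
      have h1 : (1:ℝ) / (κ - 1) ≤ (m0:ℝ) := le_trans hL1'
        (by exact_mod_cast le_trans (le_max_right _ _) (le_max_left _ _))
      rw [div_le_iff₀ (by linarith)] at h1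
      nlinarith
    have hrec : ∀ m : ℕ, m0 ≤ m →
        (κ - 1) * ((m:ℝ) + 1) + C * ν ^ 2 * (κ * ((m:ℝ) + 1) - 1) ≤ C * (m:ℝ) := by
      intro m hm
      have hm1 : (1:ℝ) ≤ (m:ℝ) := by exact_mod_cast le_trans hm01 hm
      have h1 : κ * ν ^ 2 / (q - κ * ν ^ 2) ≤ (m:ℝ) := by
        refine le_trans hm0' ?_
        exact_mod_cast le_trans (le_trans (le_max_left _ _) (le_max_left _ _)) hm
      rw [div_le_iff₀ (by linarith)] at h1
      have h2 : κ * ν ^ 2 * ((m:ℝ) + 1) ≤ q * m := by nlinarith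
      have h3 : C * (1 - q) = 2 * (κ - 1) := by
        rw [hC]; exact div_mul_cancel₀ _ (ne_of_gt (by linarith : (0:ℝ) < 1 - q))
      have h4 : ν ^ 2 * (κ * ((m:ℝ) + 1) - 1) ≤ κ * ν ^ 2 * ((m:ℝ) + 1) := by
        nlinarith [pow_nonneg (le_of_lt hν0) 2]
      nlinarith [mul_le_mul_of_nonneg_left (le_trans h4 h2) hC0]
    have htailb : ∀ n : ℕ, m0 ≤ M n →
        ∑ j ∈ Finset.Icc (M n + 1) (p n), a j ^ 2 ≤ C * (M n) * a (M n + 1) ^ 2 := by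
      intro n hMn
      exact tail_bound a hpos amono κ ν C hκ (le_of_lt hν0) hC0 m0 hm01 hLκ
        (fun l hl => (hcl l (le_trans hm0L hl)).2) hrec (p n) (M n) (p n) hMn (by omega)
    obtain ⟨m1', hm1'⟩ := exists_nat_ge (κ * (L:ℝ))
    obtain ⟨m2', hm2'⟩ := exists_nat_ge (1 / (κ - 1))
    set m1 : ℕ := max (max m1' m2') (max m0 1) with hm1
    have hδ1 : δ ≤ 1 := le_trans hδν (le_of_lt hν1)
    have hc1pos : 0 < (κ - 1) / κ * (δ ^ 4 / (1 + δ ^ 4)) / (1 + C) :=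
      div_pos (mul_pos (div_pos (by linarith) hκ0) (by positivity)) (by linarith)
    refine ⟨min ((κ - 1) / κ * (δ ^ 4 / (1 + δ ^ 4)) / (1 + C)) (1/2), 1/2,
      lt_min hc1pos (by norm_num), min_le_right _ _, ?_⟩
    filter_upwards [htail, hMtend.eventually_ge_atTop m1, Filter.eventually_ge_atTop 1]
      with n htn hMn hn1
    have hsn : 0 < σ2 / n := div_pos hσ (by exact_mod_cast hn1)
    have hM1 : 1 ≤ M n := le_trans (le_trans (le_max_right _ _) (le_max_right _ _)) hMn
    have hMm0 : m0 ≤ M n := le_trans (le_trans (le_max_left _ _) (le_max_right _ _)) hMn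
    have hML : κ * (L:ℝ) ≤ (M n : ℝ) := by
      refine le_trans hm1' ?_
      exact_mod_cast le_trans (le_trans (le_max_left _ _) (le_max_left _ _)) hMn
    have hMκ2 : 1 ≤ (κ - 1) * (M n : ℝ) := by
      have h1 : (1:ℝ) / (κ - 1) ≤ (M n : ℝ) := by
        refine le_trans hm2' ?_
        exact_mod_cast le_trans (le_trans (le_max_right _ _) (le_max_left _ _)) hMn
      rw [div_le_iff₀ (by linarith)] at h1
      linarith
    have hS0 : 0 ≤ ∑ j ∈ Finset.Icc 1 (p n), min (a j ^ 2) (σ2 / n) :=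
      Finset.sum_nonneg fun j _ => le_min (sq_nonneg _) (le_of_lt hsn)
    constructor
    · rw [hD n, hS n]
      have hlow := lower_core a hpos amono κ δ C (σ2 / n) L (p n) (M n) hκ hδ0 hδ1 hC0
        hsn hL1 hM1 (hMle n) hML hMκ2 (fun l hl => (hcl l hl).1) (htailb n hMm0)
        (hMin n) (hMout n) htn
      calc min ((κ - 1) / κ * (δ ^ 4 / (1 + δ ^ 4)) / (1 + C)) (1/2)
            * ∑ j ∈ Finset.Icc 1 (p n), min (a j ^ 2) (σ2 / n)
          ≤ ((κ - 1) / κ * (δ ^ 4 / (1 + δ ^ 4)) / (1 + C))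
            * ∑ j ∈ Finset.Icc 1 (p n), min (a j ^ 2) (σ2 / n) :=
            mul_le_mul_of_nonneg_right (min_le_left _ _) hS0
        _ ≤ _ := hlow
    · rw [hD n, hS n]
      have h1 := half_core (σ2 / n) (le_of_lt hsn) (p n) a
      calc ∑ j ∈ Finset.Icc 1 (p n),
            (min (a j ^ 2) (σ2 / n) - a j ^ 2 * (σ2 / n) / (a j ^ 2 + σ2 / n))
          ≤ (1/2) * ∑ j ∈ Finset.Icc 1 (p n), min (a j ^ 2) (σ2 / n) := h1
        _ = 1/2 * ∑ j ∈ Finset.Icc 1 (p n), min (a j ^ 2) (σ2 / n) := by norm_num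
  · -- part (ii)
    intro hc4
    rw [LittleO, NormedAddCommGroup.tendsto_nhds_zero]
    intro ε hε
    set ε1 : ℝ := min (ε / 6) (1/2) with hε1def
    have hε10 : 0 < ε1 := lt_min (by linarith) (by norm_num)
    have hε11 : ε1 ≤ 1 := le_trans (min_le_right _ _) (by norm_num)
    have h5e : 5 * ε1 < ε := by
      rcases le_total (ε / 6) (1/2) with h | h
      · rw [hε1def, min_eq_left h]; linarith
      · rw [hε1def, min_eq_right h]; linarith
    have hcond := hc4 (1 + ε1) (by linarith)
    have hev : ∀ᶠ l : ℕ in Filter.atTop, a ⌊(1 + ε1) * (l:ℝ)⌋₊ / a l < ε1 :=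
      hcond.eventually_lt_const hε10
    obtain ⟨L0, hL0⟩ := Filter.eventually_atTop.1 hev
    set L : ℕ := max L0 1 with hLdef
    have hL1 : 1 ≤ L := le_max_right _ _
    have hcl : ∀ l : ℕ, L ≤ l → a ⌊(1 + ε1) * (l:ℝ)⌋₊ ≤ ε1 * a l := by
      intro l hl
      have h1 := hL0 l (le_trans (le_max_left _ _) hl)
      have hal : 0 < a l := hpos l (le_trans (le_max_right _ _) hl)
      rw [div_lt_iff₀ hal] at h1
      linarith
    obtain ⟨m1', hm1'⟩ := exists_nat_ge (((L:ℝ) + 1) / ε1)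
    set m1 : ℕ := max m1' 1 with hm1
    filter_upwards [htail, hMtend.eventually_ge_atTop m1, Filter.eventually_ge_atTop 1]
      with n htn hMn hn1
    have hsn : 0 < σ2 / n := div_pos hσ (by exact_mod_cast hn1)
    have hM1 : 1 ≤ M n := le_trans (le_max_right _ _) hMn
    have hMbig : (L:ℝ) + 1 ≤ ε1 * (M n : ℝ) := by
      have h1 : ((L:ℝ) + 1) / ε1 ≤ (M n : ℝ) := by
        refine le_trans hm1' ?_
        exact_mod_cast le_trans (le_max_left _ _) hMn
      rw [div_le_iff₀ hε10] at h1
      linarith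
    have hP1 : 1 ≤ p n := le_trans hM1 (hMle n)
    have hcore := littleo_core a hpos amono ε1 (σ2 / n) L (p n) (M n) hε10 hε11 hsn
      hL1 hM1 (hMle n) hMbig hcl (hMin n) (hMout n)
    have hS0 : 0 < ∑ j ∈ Finset.Icc 1 (p n), min (a j ^ 2) (σ2 / n) := by
      refine Finset.sum_pos (fun j hj => ?_) ⟨1, Finset.mem_Icc.2 ⟨le_refl 1, hP1⟩⟩
      rw [Finset.mem_Icc] at hj
      exact lt_min (pow_pos (hpos j hj.1) 2) hsn
    have hD0 : 0 ≤ ∑ j ∈ Finset.Icc 1 (p n),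
        (min (a j ^ 2) (σ2 / n) - a j ^ 2 * (σ2 / n) / (a j ^ 2 + σ2 / n)) :=
      Finset.sum_nonneg fun j _ => min_sub_nonneg _ _ (sq_nonneg _) (le_of_lt hsn)
    rw [Real.norm_eq_abs, hD n, hS n,
      abs_of_nonneg (div_nonneg hD0 (le_of_lt hS0)), div_lt_iff₀ hS0]
    refine lt_of_le_of_lt hcore ?_
    exact mul_lt_mul_of_pos_right h5e hS0
end

section
/- Let n ∈ ℕ, σ² > 0, p ≤ n, θ ∈ ℝ^p, ζ ≥ 0, and let 0 = k_0 < k_1 < ⋯ < k_M = p be model sizes satisfying k_{j+1} − k_j ≤ (1 + ζ)(k_j − k_{j−1}) for all 1 ≤ j ≤ M − 1. Let R_n^{G}* be the minimum over W_M of the nested model-averaging risk with sizes k_1, …, k_M, and let R_n^{A}* be the minimum over W_p of the nested model-averaging risk with sizes 1, 2, …, p. Then R_n^{G}* ≤ (1 + ζ) R_n^{A}* + k_1 σ²/n. -/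
/-- Nested model-averaging risk with general candidate sizes `k 1 < ⋯ < k M` (and `k 0 = 0`):
`R_n(w) = ∑_{j=1}^{M} ∑_{l=k_{j−1}+1}^{k_j} [(1−γ_j)² θ_l² + σ² γ_j²/n]
  + ∑_{l=k_M+1}^{p} θ_l²`. -/
noncomputable def nestedRiskK (n p M : ℕ) (k : ℕ → ℕ) (σ2 : ℝ) (θ : ℕ → ℝ) (w : ℕ → ℝ) : ℝ :=
  (∑ j ∈ Finset.Icc 1 M, ∑ l ∈ Finset.Icc (k (j - 1) + 1) (k j),
      ((1 - cumw M w j) ^ 2 * θ l ^ 2 + σ2 * (cumw M w j) ^ 2 / n))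
    + ∑ l ∈ Finset.Icc (k M + 1) p, θ l ^ 2


private lemma cumw_anti' {M : ℕ} {w : ℕ → ℝ} (hw : ∀ m ∈ Finset.Icc 1 M, 0 ≤ w m)
    {i j : ℕ} (hi : 1 ≤ i) (hij : i ≤ j) : cumw M w j ≤ cumw M w i := by
  apply Finset.sum_le_sum_of_subset_of_nonneg (Finset.Icc_subset_Icc_left hij)
  intro m hm _
  exact hw m (Finset.mem_Icc.mpr ⟨le_trans hi (Finset.mem_Icc.mp hm).1, (Finset.mem_Icc.mp hm).2⟩)

private lemma cumw_nonneg' {M : ℕ} {w : ℕ → ℝ} (hw : ∀ m ∈ Finset.Icc 1 M, 0 ≤ w m)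
    {j : ℕ} (hj : 1 ≤ j) : 0 ≤ cumw M w j :=
  Finset.sum_nonneg fun m hm =>
    hw m (Finset.mem_Icc.mpr ⟨le_trans hj (Finset.mem_Icc.mp hm).1, (Finset.mem_Icc.mp hm).2⟩)

private lemma sum_telescope_Icc' (g : ℕ → ℝ) : ∀ M j, j ≤ M →
    ∑ m ∈ Finset.Icc j M, (g m - g (m + 1)) = g j - g (M + 1) := by
  intro M
  induction M with
  | zero => intro j hj; interval_cases j; simp
  | succ M ih =>
    intro j hj
    rcases Nat.lt_succ_iff_lt_or_eq.mp (Nat.lt_succ_of_le hj) with h | h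
    · rw [Finset.sum_Icc_succ_top (by omega), ih j (by omega)]; ring
    · subst h; simp

private lemma sum_shift_Icc' (g : ℕ → ℝ) : ∀ M,
    ∑ j ∈ Finset.Icc 2 M, g (j - 1) = ∑ j ∈ Finset.Icc 1 (M - 1), g j := by
  intro M
  induction M with
  | zero => simp
  | succ M ih =>
    rcases Nat.eq_zero_or_pos M with h | h
    · subst h; simp
    · rw [Finset.sum_Icc_succ_top (by omega), ih,
        show M + 1 - 1 = (M - 1) + 1 by omega, Finset.sum_Icc_succ_top (by omega)]

private lemma sum_partition' (k : ℕ → ℕ) (M : ℕ) (f : ℕ → ℝ)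
    (hmono : ∀ i j, i ≤ j → j ≤ M → k i ≤ k j) :
    ∀ J, J ≤ M → ∑ j ∈ Finset.Icc 1 J, ∑ l ∈ Finset.Ioc (k (j - 1)) (k j), f l
      = ∑ l ∈ Finset.Ioc (k 0) (k J), f l := by
  intro J
  induction J with
  | zero => intro _; simp
  | succ J ih =>
    intro hJ
    rw [Finset.sum_Icc_succ_top (by omega : 1 ≤ J + 1), ih (by omega),
      show J + 1 - 1 = J from rfl]
    exact Finset.sum_Ioc_consecutive f (hmono 0 J (by omega) (by omega))
      (hmono J (J + 1) (by omega) hJ)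

/-- inequality (B.37)/(C.2) of the paper.  Let the model sizes
`0 = k_0 < k_1 < ⋯ < k_M = p` satisfy `k_{j+1} − k_j ≤ (1+ζ)(k_j − k_{j−1})` for
`1 ≤ j ≤ M−1`.  Then the optimal grouped nested MA risk `R_n^{G}*` and the optimal MA risk
`R_n^{A}*` over all nested models of sizes `1, …, p` satisfy
`R_n^{G}* ≤ (1 + ζ) R_n^{A}* + k_1 σ²/n`. -/
theorem stmt_10 (n p M : ℕ) (hn : 0 < n) (hp : p ≤ n) (hM : 1 ≤ M)
    (σ2 : ℝ) (hσ : 0 < σ2) (θ : ℕ → ℝ) (ζ : ℝ) (hζ : 0 ≤ ζ)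
    (k : ℕ → ℕ) (hk0 : k 0 = 0) (hkM : k M = p)
    (hkmono : ∀ j, j < M → k j < k (j + 1))
    (hspace : ∀ j, 1 ≤ j → j ≤ M - 1 →
        ((k (j + 1) : ℝ) - (k j : ℝ)) ≤ (1 + ζ) * ((k j : ℝ) - (k (j - 1) : ℝ))) :
    sInf {r : ℝ | ∃ w, InSimplex M w ∧ r = nestedRiskK n p M k σ2 θ w}
      ≤ (1 + ζ) * sInf {r : ℝ | ∃ w, InSimplex p w ∧ r = nestedRisk n p p σ2 θ w}
        + (k 1 : ℝ) * σ2 / n := by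
  have hIccIoc : ∀ a b : ℕ, Finset.Icc (a + 1) b = Finset.Ioc a b := by
    intro a b; ext x; simp only [Finset.mem_Icc, Finset.mem_Ioc]; omega
  have hkm : ∀ i j, i ≤ j → j ≤ M → k i ≤ k j := by
    intro i j hij hjM
    induction j with
    | zero => have : i = 0 := by omega
              simp [this]
    | succ j ih =>
      rcases Nat.lt_succ_iff_lt_or_eq.mp (Nat.lt_succ_of_le hij) with h | h
      · exact le_trans (ih (by omega) (by omega)) (hkmono j (by omega)).le
      · rw [h]
  have hk1 : 1 ≤ k 1 := by
    have h := hkmono 0 hM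
    rw [hk0] at h
    norm_num at h
    omega
  have hp1 : 1 ≤ p := by have := hkm 1 M hM le_rfl; omega
  have hRiskK_nonneg : ∀ u : ℕ → ℝ, 0 ≤ nestedRiskK n p M k σ2 θ u := by
    intro u; unfold nestedRiskK
    apply add_nonneg
    · apply Finset.sum_nonneg; intro j _; apply Finset.sum_nonneg; intro l _
      have h1 : (0:ℝ) ≤ (1 - cumw M u j) ^ 2 * θ l ^ 2 := mul_nonneg (sq_nonneg _) (sq_nonneg _)
      have h2 : (0:ℝ) ≤ σ2 * (cumw M u j) ^ 2 / n := by positivity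
      linarith
    · exact Finset.sum_nonneg fun l _ => sq_nonneg _
  -- key comparison
  have hkey : ∀ w : ℕ → ℝ, InSimplex p w → ∃ v : ℕ → ℝ, InSimplex M v ∧
      nestedRiskK n p M k σ2 θ v ≤ (1 + ζ) * nestedRisk n p p σ2 θ w + (k 1 : ℝ) * σ2 / n := by
    intro w hw
    obtain ⟨hw0, hw1⟩ := hw
    set g : ℕ → ℝ := fun m => cumw p w (k (m - 1) + 1) with hg
    set v : ℕ → ℝ := fun m => g m - g (m + 1) with hv
    have hγ1 : cumw p w 1 = 1 := hw1
    have hγtop : cumw p w (p + 1) = 0 := by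
      unfold cumw; rw [Finset.Icc_eq_empty (by omega), Finset.sum_empty]
    have hgM1 : g (M + 1) = 0 := by
      simp only [hg, Nat.add_sub_cancel]; rw [hkM]; exact hγtop
    have hcum : ∀ j, 1 ≤ j → j ≤ M → cumw M v j = g j := by
      intro j h1 h2
      have hrfl : cumw M v j = ∑ m ∈ Finset.Icc j M, (g m - g (m + 1)) := rfl
      rw [hrfl, sum_telescope_Icc' g M j h2, hgM1, sub_zero]
    have hg1 : g 1 = 1 := by
      simp only [hg]; rw [show (1:ℕ) - 1 = 0 from rfl, hk0]; exact hγ1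
    have hgle1 : ∀ j, g j ≤ 1 := by
      intro j
      simp only [hg]
      calc cumw p w (k (j - 1) + 1) ≤ cumw p w 1 := cumw_anti' hw0 le_rfl (by omega)
        _ = 1 := hγ1
    have hgnn : ∀ j, 0 ≤ g j := fun j => cumw_nonneg' hw0 (by omega)
    have hvsimplex : InSimplex M v := by
      constructor
      · intro m hm
        obtain ⟨hm1, hm2⟩ := Finset.mem_Icc.mp hm
        have hmono : g (m + 1) ≤ g m := by
          simp only [hg, Nat.add_sub_cancel]
          apply cumw_anti' hw0 (by omega)
          have := hkm (m - 1) m (by omega) hm2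
          omega
        simp only [hv]; linarith
      · have hrfl : ∑ m ∈ Finset.Icc 1 M, v m = cumw M v 1 := rfl
        rw [hrfl, hcum 1 le_rfl hM, hg1]
    refine ⟨v, hvsimplex, ?_⟩
    have hLHS : nestedRiskK n p M k σ2 θ v =
        (∑ j ∈ Finset.Icc 1 M, ∑ l ∈ Finset.Ioc (k (j - 1)) (k j), (1 - g j) ^ 2 * θ l ^ 2)
        + (∑ j ∈ Finset.Icc 1 M, ∑ l ∈ Finset.Ioc (k (j - 1)) (k j), σ2 * (g j) ^ 2 / n) := by
      unfold nestedRiskK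
      rw [show Finset.Icc (k M + 1) p = ∅ from by
          rw [hkM]; exact Finset.Icc_eq_empty (by omega),
        Finset.sum_empty, add_zero, ← Finset.sum_add_distrib]
      apply Finset.sum_congr rfl
      intro j hj
      obtain ⟨hj1, hj2⟩ := Finset.mem_Icc.mp hj
      rw [hIccIoc, hcum j hj1 hj2, ← Finset.sum_add_distrib]
    have hRHS : nestedRisk n p p σ2 θ w =
        (∑ l ∈ Finset.Ioc 0 p, (1 - cumw p w l) ^ 2 * θ l ^ 2)
        + (∑ l ∈ Finset.Ioc 0 p, σ2 * (cumw p w l) ^ 2 / n) := by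
      unfold nestedRisk
      rw [Finset.Icc_eq_empty (by omega : ¬ p + 1 ≤ p), Finset.sum_empty, add_zero,
        show Finset.Icc 1 p = Finset.Ioc 0 p from hIccIoc 0 p, Finset.sum_add_distrib]
    have hbias : (∑ j ∈ Finset.Icc 1 M, ∑ l ∈ Finset.Ioc (k (j - 1)) (k j), (1 - g j) ^ 2 * θ l ^ 2)
        ≤ ∑ l ∈ Finset.Ioc 0 p, (1 - cumw p w l) ^ 2 * θ l ^ 2 := by
      have hpart := sum_partition' k M (fun l => (1 - cumw p w l) ^ 2 * θ l ^ 2) hkm M le_rfl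
      rw [hk0, hkM] at hpart
      rw [← hpart]
      apply Finset.sum_le_sum
      intro j hj
      obtain ⟨hj1, hj2⟩ := Finset.mem_Icc.mp hj
      apply Finset.sum_le_sum
      intro l hl
      obtain ⟨hl1, hl2⟩ := Finset.mem_Ioc.mp hl
      have h1 : cumw p w l ≤ g j := by
        simp only [hg]; exact cumw_anti' hw0 (by omega) (by omega)
      have h3 := hgle1 j
      apply mul_le_mul_of_nonneg_right _ (sq_nonneg _)
      exact pow_le_pow_left₀ (by linarith) (by linarith) 2
    set G : ℕ → ℝ := fun i => ∑ l ∈ Finset.Ioc (k (i - 1)) (k i), σ2 * (cumw p w l) ^ 2 / n with hG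
    have hvar : (∑ j ∈ Finset.Icc 1 M, ∑ l ∈ Finset.Ioc (k (j - 1)) (k j), σ2 * (g j) ^ 2 / n)
        ≤ (1 + ζ) * (∑ l ∈ Finset.Ioc 0 p, σ2 * (cumw p w l) ^ 2 / n) + (k 1 : ℝ) * σ2 / n := by
      have hins : Finset.Icc 1 M = insert 1 (Finset.Icc 2 M) := by
        ext x; simp only [Finset.mem_Icc, Finset.mem_insert]; omega
      rw [hins, Finset.sum_insert (by simp)]
      have hfirst : ∑ l ∈ Finset.Ioc (k (1 - 1)) (k 1), σ2 * (g 1) ^ 2 / n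
          = (k 1 : ℝ) * σ2 / n := by
        rw [hg1, Finset.sum_const, Nat.card_Ioc, show (1:ℕ) - 1 = 0 from rfl, hk0,
          Nat.sub_zero, nsmul_eq_mul]
        ring
      rw [hfirst]
      have step : ∀ j ∈ Finset.Icc 2 M, ∑ l ∈ Finset.Ioc (k (j - 1)) (k j), σ2 * (g j) ^ 2 / n
          ≤ (1 + ζ) * G (j - 1) := by
        intro j hj
        obtain ⟨hj2, hjM⟩ := Finset.mem_Icc.mp hj
        simp only [hG]
        have hk12 : k (j - 1 - 1) ≤ k (j - 1) := hkm _ _ (by omega) (by omega)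
        have hk01 : k (j - 1) ≤ k j := hkm _ _ (by omega) (by omega)
        have hsp := hspace (j - 1) (by omega) (by omega)
        rw [show j - 1 + 1 = j by omega, show j - 1 - 1 = j - 1 - 1 from rfl] at hsp
        have ht : (0:ℝ) ≤ σ2 * (g j) ^ 2 / n := by positivity
        rw [Finset.sum_const, Nat.card_Ioc, nsmul_eq_mul, Nat.cast_sub hk01]
        have hterm : ∀ l ∈ Finset.Ioc (k (j - 1 - 1)) (k (j - 1)),
            σ2 * (g j) ^ 2 / n ≤ σ2 * (cumw p w l) ^ 2 / n := by
          intro l hl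
          obtain ⟨hl1, hl2⟩ := Finset.mem_Ioc.mp hl
          have hle : g j ≤ cumw p w l := by
            simp only [hg]
            exact cumw_anti' hw0 (by omega) (by omega)
          have h2 : (g j) ^ 2 ≤ (cumw p w l) ^ 2 := pow_le_pow_left₀ (hgnn j) hle 2
          have hnpos : (0:ℝ) < (n:ℝ) := by exact_mod_cast hn
          exact (div_le_div_iff_of_pos_right hnpos).mpr (mul_le_mul_of_nonneg_left h2 hσ.le)
        have hsum : ((k (j - 1) - k (j - 1 - 1) : ℕ) : ℝ) * (σ2 * (g j) ^ 2 / n)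
            ≤ ∑ l ∈ Finset.Ioc (k (j - 1 - 1)) (k (j - 1)), σ2 * (cumw p w l) ^ 2 / n := by
          calc ((k (j - 1) - k (j - 1 - 1) : ℕ) : ℝ) * (σ2 * (g j) ^ 2 / n)
              = ∑ _l ∈ Finset.Ioc (k (j - 1 - 1)) (k (j - 1)), σ2 * (g j) ^ 2 / n := by
                rw [Finset.sum_const, Nat.card_Ioc, nsmul_eq_mul]
            _ ≤ _ := Finset.sum_le_sum hterm
        rw [Nat.cast_sub hk12] at hsum
        have hsp2 : ((j - 1 - 1 : ℕ) : ℕ) = j - 1 - 1 := rfl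
        calc ((k j : ℝ) - (k (j - 1) : ℝ)) * (σ2 * (g j) ^ 2 / n)
            ≤ ((1 + ζ) * ((k (j - 1) : ℝ) - (k (j - 1 - 1) : ℝ))) * (σ2 * (g j) ^ 2 / n) := by
              exact mul_le_mul_of_nonneg_right hsp ht
          _ = (1 + ζ) * (((k (j - 1) : ℝ) - (k (j - 1 - 1) : ℝ)) * (σ2 * (g j) ^ 2 / n)) := by ring
          _ ≤ (1 + ζ) * ∑ l ∈ Finset.Ioc (k (j - 1 - 1)) (k (j - 1)), σ2 * (cumw p w l) ^ 2 / n :=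
              mul_le_mul_of_nonneg_left hsum (by linarith)
      have hsec : ∑ j ∈ Finset.Icc 2 M, ∑ l ∈ Finset.Ioc (k (j - 1)) (k j), σ2 * (g j) ^ 2 / n
          ≤ (1 + ζ) * ∑ l ∈ Finset.Ioc 0 p, σ2 * (cumw p w l) ^ 2 / n := by
        calc ∑ j ∈ Finset.Icc 2 M, ∑ l ∈ Finset.Ioc (k (j - 1)) (k j), σ2 * (g j) ^ 2 / n
            ≤ ∑ j ∈ Finset.Icc 2 M, (1 + ζ) * G (j - 1) := Finset.sum_le_sum step
          _ = (1 + ζ) * ∑ j ∈ Finset.Icc 2 M, G (j - 1) := by rw [← Finset.mul_sum]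
          _ = (1 + ζ) * ∑ j ∈ Finset.Icc 1 (M - 1), G j := by rw [sum_shift_Icc' G M]
          _ = (1 + ζ) * ∑ l ∈ Finset.Ioc (k 0) (k (M - 1)), σ2 * (cumw p w l) ^ 2 / n := by
              rw [hG]
              rw [sum_partition' k M (fun l => σ2 * (cumw p w l) ^ 2 / n) hkm (M - 1) (by omega)]
          _ ≤ (1 + ζ) * ∑ l ∈ Finset.Ioc 0 p, σ2 * (cumw p w l) ^ 2 / n := by
              apply mul_le_mul_of_nonneg_left _ (by linarith)
              rw [hk0]
              apply Finset.sum_le_sum_of_subset_of_nonneg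
              · apply Finset.Ioc_subset_Ioc_right
                rw [← hkM]; exact hkm (M - 1) M (by omega) le_rfl
              · intro l _ _; positivity
      linarith [hsec]
    rw [hLHS, hRHS]
    have hB' : 0 ≤ ∑ l ∈ Finset.Ioc 0 p, (1 - cumw p w l) ^ 2 * θ l ^ 2 :=
      Finset.sum_nonneg fun l _ => mul_nonneg (sq_nonneg _) (sq_nonneg _)
    nlinarith [hbias, hvar, mul_nonneg hζ hB']
  -- sInf bookkeeping
  set A := {r : ℝ | ∃ w, InSimplex M w ∧ r = nestedRiskK n p M k σ2 θ w} with hA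
  set B := {r : ℝ | ∃ w, InSimplex p w ∧ r = nestedRisk n p p σ2 θ w} with hB
  have hAbdd : BddBelow A := by
    refine ⟨0, ?_⟩
    rintro r ⟨u, hu, rfl⟩
    exact hRiskK_nonneg u
  have hBne : B.Nonempty := by
    refine ⟨nestedRisk n p p σ2 θ (fun m => if m = 1 then 1 else 0),
      (fun m => if m = 1 then 1 else 0), ⟨?_, ?_⟩, rfl⟩
    · intro m _; dsimp only; split <;> norm_num
    · rw [Finset.sum_ite_eq' (Finset.Icc 1 p) 1 (fun _ => (1:ℝ))]
      simp [hp1]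
  have hmainB : ∀ b ∈ B, sInf A ≤ (1 + ζ) * b + (k 1 : ℝ) * σ2 / n := by
    rintro b ⟨u, hu, rfl⟩
    obtain ⟨v, hvs, hle⟩ := hkey u hu
    exact le_trans (csInf_le hAbdd ⟨v, hvs, rfl⟩) hle
  have h1ζ : (0:ℝ) < 1 + ζ := by linarith
  have h2 : (sInf A - (k 1 : ℝ) * σ2 / n) / (1 + ζ) ≤ sInf B := by
    apply le_csInf hBne
    intro b hb
    rw [div_le_iff₀ h1ζ]
    have := hmainB b hb
    nlinarith
  have h3 := (div_le_iff₀ h1ζ).mp h2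
  nlinarith [h3]
end

section
/- Let σ² > 0 and for each n let p_n ≤ n with p_n → ∞, and let θ^{(n)} ∈ ℝ^{p_n} satisfy sup_n Σ_j (θ_j^{(n)})² < ∞ and liminf_n max_j |θ_j^{(n)}| > 0. Let a^{(n)} be the decreasing rearrangement of (|θ^{(n)}_1|, …, |θ^{(n)}_{p_n}|). Assume the weak-ordering condition: there exist indices 0 = d_0 < d_1 < ⋯ < d_{D_n} = p_n with max_{1≤l≤D_n−1} (d_{l+1} − d_l)/(d_l − d_{l−1}) ≤ 1 + z_n for some z_n → 0, and such that for each 1 ≤ l ≤ D_n the block (|θ^{(n)}_{d_{l−1}+1}|, …, |θ^{(n)}_{d_l}|) is a permutation of (a^{(n)}_{d_{l−1}+1}, …, a^{(n)}_{d_l}). Let R_n^{A}* be the minimum over W_{p_n} of the nested model-averaging risk of θ^{(n)} with sizes 1, …, p_n in the given coordinate order, and ρ_n^{MA} = ρ^{MA}(θ^{(n)}). If d_1 = o(n ρ_n^{MA}), then R_n^{A}*/ρ_n^{MA} → 1 as n → ∞. -/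
/-!
With `s = σ²/n`, minimising each coordinate of the all-subset MA risk separately in `λ_j` shows
`ρ^{MA} ≥ ∑_j s θ_j² / (θ_j² + s)`, and `ρ^{MA} ≤ R^{A}*` because averaging the nested models
`{1, …, m}` is a special case of all-subset averaging. For the reverse bound take cumulative
weights `γ_j = 1` on the first block and `γ_j = b² / (b² + s)` on every later block, `b` being the
largest coefficient of that block. Each coordinate then costs at most `s γ_j`, and the
weak-ordering condition bounds the cost of block `l + 1` by `1 + z_n` times the oracle cost of
block `l`. Hence `ρ^{MA} ≤ R^{A}* ≤ d_1 s + (1 + z_n) ρ^{MA}`, and `d_1 s = o(ρ^{MA})`.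
-/

open Finset Filter Topology

/-- The minimiser of `λ ↦ (1 - λ)² x² + s λ²`; the minimum is `oracleRisk s x = s x² / (x² + s)`. -/
noncomputable def oracleWeight (s x : ℝ) : ℝ := x ^ 2 / (x ^ 2 + s)

noncomputable def oracleRisk (s x : ℝ) : ℝ := s * oracleWeight s x

section Oracle

variable {s x y : ℝ}

lemma oracleWeight_nonneg (hs : 0 ≤ s) (x : ℝ) : 0 ≤ oracleWeight s x := by
  unfold oracleWeight; positivity

lemma oracleWeight_le_one (hs : 0 ≤ s) (x : ℝ) : oracleWeight s x ≤ 1 :=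
  div_le_one_of_le₀ (by linarith) (by positivity)

lemma oracleRisk_abs (s x : ℝ) : oracleRisk s |x| = oracleRisk s x := by
  simp only [oracleRisk, oracleWeight, sq_abs]

lemma oracleWeight_le_oracleWeight (hs : 0 < s) (hx : 0 ≤ x) (hxy : x ≤ y) :
    oracleWeight s x ≤ oracleWeight s y := by
  unfold oracleWeight
  rw [div_le_div_iff₀ (by positivity) (by positivity)]
  nlinarith [pow_le_pow_left₀ hx hxy 2]

lemma oracleRisk_nonneg (hs : 0 ≤ s) (x : ℝ) : 0 ≤ oracleRisk s x :=
  mul_nonneg hs (oracleWeight_nonneg hs x)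

lemma oracleRisk_pos (hs : 0 < s) (hx : x ≠ 0) : 0 < oracleRisk s x := by
  unfold oracleRisk oracleWeight; positivity

lemma oracleRisk_le (hs : 0 < s) (x l : ℝ) : oracleRisk s x ≤ (1 - l) ^ 2 * x ^ 2 + s * l ^ 2 := by
  unfold oracleRisk oracleWeight
  rw [← mul_div_assoc, div_le_iff₀ (by positivity)]
  nlinarith [sq_nonneg (x ^ 2 * (1 - l) - s * l)]

lemma risk_oracleWeight_le (hs : 0 < s) (hxy : |x| ≤ y) :
    (1 - oracleWeight s y) ^ 2 * x ^ 2 + s * oracleWeight s y ^ 2 ≤ oracleRisk s y := by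
  have hy : 0 < y ^ 2 + s := by positivity
  have hxy2 : x ^ 2 ≤ y ^ 2 := sq_le_sq' (abs_le.mp hxy).1 (abs_le.mp hxy).2
  have key : s ^ 2 * x ^ 2 + s * (y ^ 2) ^ 2 ≤ s * y ^ 2 * (y ^ 2 + s) := by
    nlinarith [mul_le_mul_of_nonneg_left hxy2 (sq_nonneg s)]
  calc (1 - oracleWeight s y) ^ 2 * x ^ 2 + s * oracleWeight s y ^ 2
      = (s ^ 2 * x ^ 2 + s * (y ^ 2) ^ 2) / (y ^ 2 + s) ^ 2 := by
        unfold oracleWeight; field_simp; ring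
    _ ≤ s * y ^ 2 * (y ^ 2 + s) / (y ^ 2 + s) ^ 2 := by gcongr
    _ = oracleRisk s y := by unfold oracleRisk oracleWeight; field_simp

end Oracle

section ModelAveraging

variable {n p P : ℕ} {σ2 : ℝ} {θ w : ℕ → ℝ}

lemma subsetMARisk_nonneg (hσ : 0 ≤ σ2) (v : Finset ℕ → ℝ) : 0 ≤ subsetMARisk n p σ2 θ v :=
  sum_nonneg fun _ _ => by positivity

lemma nestedRisk_nonneg (hσ : 0 ≤ σ2) (w : ℕ → ℝ) : 0 ≤ nestedRisk n p P σ2 θ w :=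
  add_nonneg (sum_nonneg fun _ _ => by positivity) (sum_nonneg fun _ _ => by positivity)

lemma isSubsetWeight_indicator_empty (p : ℕ) :
    IsSubsetWeight p fun I => if I = ∅ then 1 else 0 := by
  refine ⟨fun I _ => by positivity, ?_⟩
  rw [sum_ite_eq' _ (∅ : Finset ℕ) (fun _ => (1 : ℝ)), if_pos (empty_mem_powerset _)]

lemma sum_oracleRisk_le_rhoMA (hσ : 0 < σ2) (hn : 0 < n) :
    ∑ j ∈ Icc 1 p, oracleRisk (σ2 / n) (θ j) ≤ rhoMA n p σ2 θ := by
  refine le_csInf ⟨_, _, isSubsetWeight_indicator_empty p, rfl⟩ ?_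
  rintro r ⟨v, -, rfl⟩
  refine sum_le_sum fun j _ => ?_
  have hs : 0 < σ2 / n := by positivity
  calc oracleRisk (σ2 / n) (θ j)
      ≤ (1 - coordWeight p v j) ^ 2 * θ j ^ 2 + σ2 / n * coordWeight p v j ^ 2 :=
        oracleRisk_le hs _ _
    _ = _ := by ring

/-- The nested model of size `m` is the subset `{1, …, m}`, so nested model averaging is the
special case of all-subset averaging that puts weight `w m` on `{1, …, m}`. -/
lemma exists_subsetWeight_eq_nestedRisk (hw : InSimplex P w) :
    ∃ v, IsSubsetWeight P v ∧ subsetMARisk n P σ2 θ v = nestedRisk n P P σ2 θ w := by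
  classical
  set v : Finset ℕ → ℝ := fun I => ∑ m ∈ Icc 1 P, if Icc 1 m = I then w m else 0
  have hmem : ∀ m ∈ Icc 1 P, Icc 1 m ∈ (Icc 1 P).powerset := fun m hm =>
    mem_powerset.mpr (Icc_subset_Icc_right (mem_Icc.mp hm).2)
  have hsum : ∀ S : Finset (Finset ℕ),
      ∑ I ∈ S, v I = ∑ m ∈ Icc 1 P, if Icc 1 m ∈ S then w m else 0 := fun S => by
    rw [sum_comm]; exact sum_congr rfl fun m _ => sum_ite_eq _ _ _
  refine ⟨v, ⟨fun I _ => sum_nonneg fun m hm => ?_, ?_⟩, ?_⟩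
  · split_ifs
    exacts [hw.1 m hm, le_rfl]
  · rw [hsum, ← hw.2]
    exact sum_congr rfl fun m hm => if_pos (hmem m hm)
  · rw [subsetMARisk, nestedRisk, Icc_eq_empty (by omega : ¬P + 1 ≤ P), sum_empty, add_zero]
    refine sum_congr rfl fun j hj => ?_
    suffices coordWeight P v j = cumw P w j by rw [this]
    rw [coordWeight, hsum, cumw, ← sum_filter]
    congr 1
    ext m
    simp only [mem_filter, mem_Icc, mem_powerset] at hj ⊢
    constructor
    · rintro ⟨hm, -, hjm⟩; exact ⟨hjm.2, hm.2⟩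
    · rintro ⟨hjm, hmP⟩; exact ⟨⟨by omega, hmP⟩, Icc_subset_Icc_right hmP, by omega, hjm⟩

lemma rhoMA_le_sInf_nestedRisk (hσ : 0 ≤ σ2) (hP : 1 ≤ P) :
    rhoMA n P σ2 θ ≤ sInf {r | ∃ w, InSimplex P w ∧ r = nestedRisk n P P σ2 θ w} := by
  have hw : InSimplex P fun m => if m = 1 then 1 else 0 := by
    refine ⟨fun m _ => by positivity, ?_⟩
    rw [sum_ite_eq' _ 1 (fun _ => (1 : ℝ)), if_pos (mem_Icc.mpr ⟨le_rfl, hP⟩)]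
  refine le_csInf ⟨_, _, hw, rfl⟩ ?_
  rintro r ⟨w, hw, rfl⟩
  obtain ⟨v, hv, hvw⟩ := exists_subsetWeight_eq_nestedRisk (n := n) (σ2 := σ2) (θ := θ) hw
  exact hvw ▸ csInf_le ⟨0, fun r ⟨v, _, hr⟩ => hr ▸ subsetMARisk_nonneg hσ v⟩ ⟨v, hv, rfl⟩

lemma exists_inSimplex_cumw_eq {γ : ℕ → ℝ} (hP : 1 ≤ P) (hγ : AntitoneOn γ (Set.Icc 1 P))
    (hγ0 : 0 ≤ γ P) (hγ1 : γ 1 = 1) :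
    ∃ w, InSimplex P w ∧ ∀ j ∈ Icc 1 P, cumw P w j = γ j := by
  set γ' : ℕ → ℝ := fun m => if m ≤ P then γ m else 0
  have hcumw : ∀ j ∈ Icc 1 P, ∑ m ∈ Icc j P, (γ' m - γ' (m + 1)) = γ j := fun j hj => by
    have hjP := (mem_Icc.mp hj).2
    have h := sum_Ico_sub γ' (show j ≤ P + 1 by omega)
    have hγ'P : γ' (P + 1) = 0 := if_neg (by omega)
    have hγ'j : γ' j = γ j := if_pos hjP
    rw [Ico_add_one_right_eq_Icc, sum_sub_distrib] at h
    rw [sum_sub_distrib]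
    linarith
  refine ⟨fun m => γ' m - γ' (m + 1), ⟨fun m hm => ?_, ?_⟩, hcumw⟩
  · obtain ⟨h1m, hmP⟩ := mem_Icc.mp hm
    simp only [γ', if_pos hmP]
    split_ifs with h
    · exact sub_nonneg.mpr (hγ ⟨h1m, hmP⟩ ⟨by omega, h⟩ (by omega))
    · rw [show m = P by omega]; simpa using hγ0
  · rw [hcumw 1 (mem_Icc.mpr ⟨le_rfl, hP⟩), hγ1]

lemma sInf_nestedRisk_le {γ : ℕ → ℝ} (hσ : 0 ≤ σ2) (hP : 1 ≤ P) (hγ : AntitoneOn γ (Set.Icc 1 P))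
    (hγ0 : 0 ≤ γ P) (hγ1 : γ 1 = 1) :
    sInf {r | ∃ w, InSimplex P w ∧ r = nestedRisk n P P σ2 θ w}
      ≤ ∑ j ∈ Icc 1 P, ((1 - γ j) ^ 2 * θ j ^ 2 + σ2 / n * γ j ^ 2) := by
  obtain ⟨w, hw, hwγ⟩ := exists_inSimplex_cumw_eq hP hγ hγ0 hγ1
  have hbdd : BddBelow {r | ∃ w, InSimplex P w ∧ r = nestedRisk n P P σ2 θ w} :=
    ⟨0, by rintro r ⟨w, -, rfl⟩; exact nestedRisk_nonneg hσ w⟩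
  refine (csInf_le hbdd ⟨w, hw, rfl⟩).trans_eq ?_
  rw [nestedRisk, Icc_eq_empty (by omega : ¬P + 1 ≤ P), sum_empty, add_zero]
  refine sum_congr rfl fun j hj => ?_
  rw [hwγ j hj]; ring

end ModelAveraging

lemma exists_apply_eq_of_map_eq_map {α β : Type*} {s : Finset α} {f g : α → β}
    (h : s.val.map f = s.val.map g) {j : α} (hj : j ∈ s) : ∃ i ∈ s, g i = f j :=
  Multiset.mem_map.mp (h ▸ Multiset.mem_map_of_mem f hj)

lemma sum_comp_eq_of_map_eq_map {α β M : Type*} [AddCommMonoid M] {s : Finset α} {f g : α → β}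
    (h : s.val.map f = s.val.map g) (φ : β → M) : ∑ j ∈ s, φ (f j) = ∑ j ∈ s, φ (g j) := by
  calc ∑ j ∈ s, φ (f j) = ((s.val.map f).map φ).sum := by rw [Multiset.map_map]; rfl
    _ = ((s.val.map g).map φ).sum := by rw [h]
    _ = ∑ j ∈ s, φ (g j) := by rw [Multiset.map_map]; rfl

lemma sum_Ioc_eq_sum_range_sum_Ioc {M : Type*} [AddCommMonoid M] (f : ℕ → M) {d : ℕ → ℕ} :
    ∀ {L : ℕ}, MonotoneOn d (Set.Iic L) →
      ∑ j ∈ Ioc (d 0) (d L), f j = ∑ l ∈ range L, ∑ j ∈ Ioc (d l) (d (l + 1)), f j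
  | 0, _ => by simp
  | L + 1, hd => by
    have hmem : ∀ {l}, l ≤ L + 1 → l ∈ Set.Iic (L + 1) := Set.mem_Iic.mpr
    rw [sum_range_succ,
      ← sum_Ioc_eq_sum_range_sum_Ioc f (hd.mono (Set.Iic_subset_Iic.mpr L.le_succ)),
      sum_Ioc_consecutive _ (hd (hmem (Nat.zero_le _)) (hmem L.le_succ) (Nat.zero_le _))
        (hd (hmem L.le_succ) (hmem le_rfl) L.le_succ)]

section Blocks

variable {d : ℕ → ℕ} {D P j l : ℕ} {u : ℕ → ℝ}

/-- The index `l` of the block `Ioc (d l) (d (l + 1))` containing `j`. -/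
def blockIndex (d : ℕ → ℕ) (D j : ℕ) : ℕ := Nat.findGreatest (fun l => d l < j) D

lemma blockIndex_mono (d : ℕ → ℕ) (D : ℕ) : Monotone (blockIndex d D) := fun _ _ hjj' =>
  Nat.findGreatest_mono_left (fun _ hl => lt_of_lt_of_le hl hjj') D

lemma blockIndex_eq (hd : StrictMonoOn d (Set.Iic D)) (hl : l < D)
    (hj : j ∈ Ioc (d l) (d (l + 1))) : blockIndex d D j = l := by
  obtain ⟨hlj, hjl⟩ := mem_Ioc.mp hj
  refine le_antisymm ?_ (Nat.le_findGreatest hl.le hlj)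
  by_contra! hlt
  have hspec : d (blockIndex d D j) < j := Nat.findGreatest_spec (P := fun l => d l < j) hl.le hlj
  have hmono : d (l + 1) ≤ d (blockIndex d D j) :=
    hd.monotoneOn (Set.mem_Iic.mpr hl) (Set.mem_Iic.mpr (Nat.findGreatest_le D)) hlt
  omega

lemma blockIndex_lt_and_mem (hd0 : d 0 = 0) (hdD : d D = P) (hj : j ∈ Icc 1 P) :
    blockIndex d D j < D ∧ j ∈ Ioc (d (blockIndex d D j)) (d (blockIndex d D j + 1)) := by
  obtain ⟨h1j, hjP⟩ := mem_Icc.mp hj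
  have hspec : d (blockIndex d D j) < j :=
    Nat.findGreatest_spec (P := fun l => d l < j) (Nat.zero_le D) (by rw [hd0]; omega)
  have hlt : blockIndex d D j < D :=
    lt_of_le_of_ne (Nat.findGreatest_le D) fun h => by rw [h] at hspec; omega
  refine ⟨hlt, mem_Ioc.mpr ⟨hspec, ?_⟩⟩
  exact not_lt.mp (Nat.findGreatest_is_greatest (P := fun l => d l < j) (Nat.lt_succ_self _) hlt)

lemma blockIndex_succ_mem (hd0 : d 0 = 0) (hdD : d D = P) (hj : j ∈ Icc 1 P) :
    d (blockIndex d D j) + 1 ∈ Icc 1 P := by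
  have h := mem_Ioc.mp (blockIndex_lt_and_mem hd0 hdD hj).2
  have := mem_Icc.mp hj
  exact mem_Icc.mpr ⟨by omega, by omega⟩

noncomputable def blockWeight (d : ℕ → ℕ) (D : ℕ) (u : ℕ → ℝ) (j : ℕ) : ℝ :=
  if blockIndex d D j = 0 then 1 else u (d (blockIndex d D j) + 1)

lemma blockWeight_of_mem_Ioc (hd : StrictMonoOn d (Set.Iic D)) (hl : l < D)
    (hj : j ∈ Ioc (d l) (d (l + 1))) :
    blockWeight d D u j = if l = 0 then 1 else u (d l + 1) := by
  rw [blockWeight, blockIndex_eq hd hl hj]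

lemma blockWeight_one (hd : StrictMonoOn d (Set.Iic D)) (hD : 1 ≤ D) (hd0 : d 0 = 0) :
    blockWeight d D u 1 = 1 := by
  have h01 : d 0 < d (0 + 1) :=
    hd (Set.mem_Iic.mpr (Nat.zero_le D)) (Set.mem_Iic.mpr hD) Nat.zero_lt_one
  rw [blockWeight_of_mem_Ioc hd hD (mem_Ioc.mpr ⟨by omega, by omega⟩), if_pos rfl]

lemma blockWeight_nonneg (hd0 : d 0 = 0) (hdD : d D = P) (hu0 : ∀ j ∈ Icc 1 P, 0 ≤ u j)
    (hj : j ∈ Icc 1 P) : 0 ≤ blockWeight d D u j := by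
  unfold blockWeight
  split_ifs
  exacts [zero_le_one, hu0 _ (blockIndex_succ_mem hd0 hdD hj)]

lemma blockWeight_antitoneOn (hd : StrictMonoOn d (Set.Iic D)) (hd0 : d 0 = 0) (hdD : d D = P)
    (hu : AntitoneOn u (Set.Icc 1 P)) (hu1 : ∀ j ∈ Icc 1 P, u j ≤ 1) :
    AntitoneOn (blockWeight d D u) (Set.Icc 1 P) := by
  intro j hj j' hj' hjj'
  rw [← coe_Icc, mem_coe] at hj hj'
  have hbb' := blockIndex_mono d D hjj'
  unfold blockWeight
  have hmem : ∀ {i}, i ∈ Icc 1 P → d (blockIndex d D i) + 1 ∈ Set.Icc 1 P := fun hi =>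
    Set.mem_Icc.mpr (mem_Icc.mp (blockIndex_succ_mem hd0 hdD hi))
  split_ifs with hb' hb hb
  · exact le_rfl
  · omega
  · exact hu1 _ (blockIndex_succ_mem hd0 hdD hj')
  · have hdbb' : d (blockIndex d D j) ≤ d (blockIndex d D j') :=
      hd.monotoneOn (Set.mem_Iic.mpr (Nat.findGreatest_le D))
        (Set.mem_Iic.mpr (Nat.findGreatest_le D)) hbb'
    exact hu (hmem hj) (hmem hj') (by omega)

lemma sum_Ioc_blockWeight (hd : StrictMonoOn d (Set.Iic D)) (hl : l < D) :
    ∑ j ∈ Ioc (d l) (d (l + 1)), blockWeight d D u j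
      = ((d (l + 1) : ℝ) - d l) * if l = 0 then 1 else u (d l + 1) := by
  have hdl : d l < d (l + 1) := hd (Set.mem_Iic.mpr hl.le) (Set.mem_Iic.mpr hl) l.lt_succ_self
  rw [sum_congr rfl fun j hj => blockWeight_of_mem_Ioc hd hl hj, sum_const, Nat.card_Ioc,
    nsmul_eq_mul, Nat.cast_sub hdl.le]

/-- By the weak-ordering condition on the block lengths, the weight spent on block `l + 1` is
charged to the coefficients of block `l`, which all dominate the leading one of block `l + 1`. -/
lemma sum_blockWeight_le {z : ℝ} (hd : StrictMonoOn d (Set.Iic D)) (hd0 : d 0 = 0)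
    (hdD : d D = P)
    (hdratio : ∀ l, 1 ≤ l → l ≤ D - 1 →
      ((d (l + 1) : ℝ) - d l) ≤ (1 + z) * ((d l : ℝ) - d (l - 1)))
    (hu : AntitoneOn u (Set.Icc 1 P)) (hu0 : ∀ j ∈ Icc 1 P, 0 ≤ u j) (hz : 0 ≤ 1 + z) :
    ∑ j ∈ Icc 1 P, blockWeight d D u j ≤ d 1 + (1 + z) * ∑ j ∈ Icc 1 P, u j := by
  obtain _ | D := D
  · simp [← hdD, hd0]
  have hIcc : Icc 1 P = Ioc (d 0) (d (D + 1)) := by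
    rw [hd0, hdD, ← Icc_add_one_left_eq_Ioc, zero_add]
  have hmem : ∀ {l}, l ≤ D + 1 → l ∈ Set.Iic (D + 1) := Set.mem_Iic.mpr
  have hblock : ∀ l ∈ range D, ∑ j ∈ Ioc (d (l + 1)) (d (l + 1 + 1)), blockWeight d (D + 1) u j
      ≤ (1 + z) * ∑ j ∈ Ioc (d l) (d (l + 1)), u j := by
    intro l hl
    have hlD := mem_range.mp hl
    have hd12 : d (l + 1) < d (l + 2) := hd (hmem (by omega)) (hmem (by omega)) (by omega)
    have hd01 : d l < d (l + 1) := hd (hmem (by omega)) (hmem (by omega)) (by omega)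
    have hdP : d (l + 2) ≤ P := hdD ▸ hd.monotoneOn (hmem (by omega)) (hmem le_rfl) (by omega)
    have hlead : ∀ j ∈ Ioc (d l) (d (l + 1)), u (d (l + 1)) ≤ u j := fun j hj => by
      have hj := mem_Ioc.mp hj
      exact hu (Set.mem_Icc.mpr ⟨by omega, by omega⟩) (Set.mem_Icc.mpr ⟨by omega, by omega⟩) hj.2
    rw [sum_Ioc_blockWeight hd (by omega), if_neg l.succ_ne_zero]
    calc ((d (l + 1 + 1) : ℝ) - d (l + 1)) * u (d (l + 1) + 1)
        ≤ ((d (l + 2) : ℝ) - d (l + 1)) * u (d (l + 1)) := by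
          refine mul_le_mul_of_nonneg_left (hu ?_ ?_ (Nat.le_succ _)) ?_
          · exact Set.mem_Icc.mpr ⟨by omega, by omega⟩
          · exact Set.mem_Icc.mpr ⟨by omega, by omega⟩
          · exact sub_nonneg.mpr (by exact_mod_cast hd12.le)
      _ ≤ (1 + z) * ((d (l + 1) : ℝ) - d l) * u (d (l + 1)) := by
          refine mul_le_mul_of_nonneg_right (hdratio (l + 1) (by omega) (by omega)) ?_
          exact hu0 _ (mem_Icc.mpr ⟨by omega, by omega⟩)
      _ ≤ (1 + z) * ∑ j ∈ Ioc (d l) (d (l + 1)), u j := by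
          rw [mul_assoc]
          refine mul_le_mul_of_nonneg_left ?_ hz
          have := card_nsmul_le_sum _ _ _ hlead
          rwa [Nat.card_Ioc, nsmul_eq_mul, Nat.cast_sub hd01.le] at this
  calc ∑ j ∈ Icc 1 P, blockWeight d (D + 1) u j
      = ∑ l ∈ range D, ∑ j ∈ Ioc (d (l + 1)) (d (l + 1 + 1)), blockWeight d (D + 1) u j
          + ∑ j ∈ Ioc (d 0) (d (0 + 1)), blockWeight d (D + 1) u j := by
        rw [hIcc, sum_Ioc_eq_sum_range_sum_Ioc _ hd.monotoneOn, sum_range_succ']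
    _ ≤ ∑ l ∈ range D, (1 + z) * ∑ j ∈ Ioc (d l) (d (l + 1)), u j + d 1 := by
        refine add_le_add (sum_le_sum hblock) (le_of_eq ?_)
        rw [sum_Ioc_blockWeight hd (Nat.succ_pos D), if_pos rfl, hd0]
        simp
    _ = (1 + z) * ∑ j ∈ Ioc (d 0) (d D), u j + d 1 := by
        rw [← mul_sum, sum_Ioc_eq_sum_range_sum_Ioc _
          (hd.monotoneOn.mono (Set.Iic_subset_Iic.mpr D.le_succ))]
    _ ≤ d 1 + (1 + z) * ∑ j ∈ Icc 1 P, u j := by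
        rw [add_comm]
        refine add_le_add_right (mul_le_mul_of_nonneg_left ?_ hz) _
        refine sum_le_sum_of_subset_of_nonneg ?_ fun j hj _ => hu0 j hj
        rw [hIcc]
        exact Ioc_subset_Ioc_right (hd.monotoneOn (hmem D.le_succ) (hmem le_rfl) D.le_succ)

end Blocks

section WeakOrdering

variable {n P D : ℕ} {σ2 z : ℝ} {θ a : ℕ → ℝ} {d : ℕ → ℕ}

lemma abs_le_leading_of_block (hd : StrictMonoOn d (Set.Iic D)) (hd0 : d 0 = 0) (hdD : d D = P)
    (ha : AntitoneOn a (Set.Icc 1 P))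
    (hblock : ∀ l, 1 ≤ l → l ≤ D →
      ((Icc (d (l - 1) + 1) (d l)).val.map fun j => |θ j|)
        = ((Icc (d (l - 1) + 1) (d l)).val.map fun j => a j))
    {j : ℕ} (hj : j ∈ Icc 1 P) : |θ j| ≤ a (d (blockIndex d D j) + 1) := by
  set l := blockIndex d D j
  obtain ⟨hl, hjl⟩ := blockIndex_lt_and_mem hd0 hdD hj
  have hperm := hblock (l + 1) (by omega) hl
  rw [Nat.add_sub_cancel, Icc_add_one_left_eq_Ioc] at hperm
  obtain ⟨i, hi, hai⟩ := exists_apply_eq_of_map_eq_map hperm hjl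
  have hiP : d (l + 1) ≤ P := hdD ▸ hd.monotoneOn (Set.mem_Iic.mpr hl) (Set.mem_Iic.mpr le_rfl) hl
  have := mem_Ioc.mp hi
  rw [← hai]
  exact ha (Set.mem_Icc.mpr ⟨by omega, by omega⟩) (Set.mem_Icc.mpr ⟨by omega, by omega⟩) (by omega)

lemma sInf_nestedRisk_le_of_weakOrdering (hσ : 0 < σ2) (hn : 0 < n) (hP : 1 ≤ P)
    (hamono : ∀ j, 1 ≤ j → j < P → a (j + 1) ≤ a j)
    (haperm : ((Icc 1 P).val.map fun j => |θ j|) = ((Icc 1 P).val.map fun j => a j))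
    (hd0 : d 0 = 0) (hdD : d D = P) (hdmono : ∀ l, l < D → d l < d (l + 1))
    (hdratio : ∀ l, 1 ≤ l → l ≤ D - 1 →
      ((d (l + 1) : ℝ) - d l) ≤ (1 + z) * ((d l : ℝ) - d (l - 1)))
    (hblock : ∀ l, 1 ≤ l → l ≤ D →
      ((Icc (d (l - 1) + 1) (d l)).val.map fun j => |θ j|)
        = ((Icc (d (l - 1) + 1) (d l)).val.map fun j => a j))
    (hz : 0 ≤ 1 + z) :
    sInf {r | ∃ w, InSimplex P w ∧ r = nestedRisk n P P σ2 θ w}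
      ≤ d 1 * σ2 / n + (1 + z) * ∑ j ∈ Icc 1 P, oracleRisk (σ2 / n) (θ j) := by
  have hs : 0 < σ2 / n := by positivity
  have hd : StrictMonoOn d (Set.Iic D) := strictMonoOn_of_lt_succ Set.ordConnected_Iic
    fun l _ _ hl => by rw [Order.succ_eq_add_one] at hl ⊢; exact hdmono l (Set.mem_Iic.mp hl)
  have hD : 1 ≤ D := Nat.one_le_iff_ne_zero.mpr fun h => by rw [h, hd0] at hdD; omega
  have ha : AntitoneOn a (Set.Icc 1 P) := antitoneOn_of_succ_le Set.ordConnected_Icc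
    fun j _ hj hj1 => by
      rw [Order.succ_eq_add_one] at hj1 ⊢
      exact hamono j (Set.mem_Icc.mp hj).1 (Set.mem_Icc.mp hj1).2
  have ha0 : ∀ j ∈ Icc 1 P, 0 ≤ a j := fun j hj => by
    obtain ⟨i, -, hi⟩ := exists_apply_eq_of_map_eq_map haperm.symm hj
    exact hi ▸ abs_nonneg _
  set u : ℕ → ℝ := fun j => oracleWeight (σ2 / n) (a j)
  have hu : AntitoneOn u (Set.Icc 1 P) := fun i hi j hj hij =>
    oracleWeight_le_oracleWeight hs (ha0 j (by simpa using hj)) (ha hi hj hij)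
  have hu0 : ∀ j ∈ Icc 1 P, 0 ≤ u j := fun j _ => oracleWeight_nonneg hs.le _
  set γ := blockWeight d D u
  calc sInf {r | ∃ w, InSimplex P w ∧ r = nestedRisk n P P σ2 θ w}
      ≤ ∑ j ∈ Icc 1 P, ((1 - γ j) ^ 2 * θ j ^ 2 + σ2 / n * γ j ^ 2) :=
        sInf_nestedRisk_le hσ.le hP
          (blockWeight_antitoneOn hd hd0 hdD hu fun j _ => oracleWeight_le_one hs.le _)
          (blockWeight_nonneg hd0 hdD hu0 (mem_Icc.mpr ⟨hP, le_rfl⟩)) (blockWeight_one hd hD hd0)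
    _ ≤ ∑ j ∈ Icc 1 P, σ2 / n * γ j := sum_le_sum fun j hj => by
        by_cases hb : blockIndex d D j = 0
        · simp only [γ, blockWeight, if_pos hb]; norm_num
        · simp only [γ, blockWeight, if_neg hb]
          exact risk_oracleWeight_le hs (abs_le_leading_of_block hd hd0 hdD ha hblock hj)
    _ ≤ σ2 / n * (d 1 + (1 + z) * ∑ j ∈ Icc 1 P, u j) := by
        rw [← mul_sum]
        exact mul_le_mul_of_nonneg_left (sum_blockWeight_le hd hd0 hdD hdratio hu hu0 hz) hs.le
    _ = d 1 * σ2 / n + (1 + z) * ∑ j ∈ Icc 1 P, oracleRisk (σ2 / n) (a j) := by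
        simp only [oracleRisk, u, ← mul_sum]; ring
    _ = d 1 * σ2 / n + (1 + z) * ∑ j ∈ Icc 1 P, oracleRisk (σ2 / n) (θ j) := by
        simp only [← oracleRisk_abs _ (θ _), sum_comp_eq_of_map_eq_map haperm]

lemma rhoMA_pos (hσ : 0 < σ2) (hn : 0 < n) {j : ℕ} (hj : j ∈ Icc 1 P) (hθ : θ j ≠ 0) :
    0 < rhoMA n P σ2 θ := by
  have hs : 0 < σ2 / n := by positivity
  calc 0 < oracleRisk (σ2 / n) (θ j) := oracleRisk_pos hs hθ
    _ ≤ ∑ i ∈ Icc 1 P, oracleRisk (σ2 / n) (θ i) :=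
        single_le_sum (fun i _ => oracleRisk_nonneg hs.le _) hj
    _ ≤ rhoMA n P σ2 θ := sum_oracleRisk_le_rhoMA hσ hn

end WeakOrdering

lemma tendsto_div_of_le_of_le_add {α : Type*} {F : Filter α} {R ρ e z : α → ℝ}
    (hz : Tendsto z F (𝓝 0)) (he : Tendsto (fun n => e n / ρ n) F (𝓝 0))
    (h : ∀ᶠ n in F, 0 < ρ n ∧ ρ n ≤ R n ∧ R n ≤ e n + (1 + z n) * ρ n) :
    Tendsto (fun n => R n / ρ n) F (𝓝 1) := by
  have hup : Tendsto (fun n => e n / ρ n + (1 + z n)) F (𝓝 1) := by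
    simpa using he.add (tendsto_const_nhds.add hz)
  refine tendsto_of_tendsto_of_tendsto_of_le_of_le' tendsto_const_nhds hup ?_ ?_
  · filter_upwards [h] with n ⟨hρ, hlow, _⟩
    rwa [le_div_iff₀ hρ, one_mul]
  · filter_upwards [h] with n ⟨hρ, _, hR⟩
    rw [div_add' _ _ _ hρ.ne', div_le_div_iff_of_pos_right hρ]
    linarith

theorem stmt_11_general (σ2 : ℝ) (hσ : 0 < σ2)
    (p : ℕ → ℕ)
    (θ : ℕ → ℕ → ℝ)
    (hmax : ∃ c : ℝ, 0 < c ∧ ∀ᶠ n in Filter.atTop, ∃ j ∈ Finset.Icc 1 (p n), c ≤ |θ n j|)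
    (a : ℕ → ℕ → ℝ)
    (hamono : ∀ n, ∀ j, 1 ≤ j → j < p n → a n (j + 1) ≤ a n j)
    (haperm : ∀ n, ((Finset.Icc 1 (p n)).val.map fun j => |θ n j|)
        = ((Finset.Icc 1 (p n)).val.map fun j => a n j))
    (D : ℕ → ℕ) (d : ℕ → ℕ → ℕ) (z : ℕ → ℝ)
    (hz : Filter.Tendsto z Filter.atTop (nhds 0))
    (hd0 : ∀ n, d n 0 = 0) (hdD : ∀ n, d n (D n) = p n)
    (hdmono : ∀ n, ∀ l, l < D n → d n l < d n (l + 1))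
    (hdratio : ∀ n, ∀ l, 1 ≤ l → l ≤ D n - 1 →
        ((d n (l + 1) : ℝ) - (d n l : ℝ)) ≤ (1 + z n) * ((d n l : ℝ) - (d n (l - 1) : ℝ)))
    (hblock : ∀ n, ∀ l, 1 ≤ l → l ≤ D n →
        ((Finset.Icc (d n (l - 1) + 1) (d n l)).val.map fun j => |θ n j|)
          = ((Finset.Icc (d n (l - 1) + 1) (d n l)).val.map fun j => a n j))
    (RA : ℕ → ℝ)
    (hRA : ∀ n, RA n
        = sInf {r : ℝ | ∃ w, InSimplex (p n) w ∧ r = nestedRisk n (p n) (p n) σ2 (θ n) w})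
    (hd1 : Filter.Tendsto (fun n => (d n 1 : ℝ) / ((n : ℝ) * rhoMA n (p n) σ2 (θ n)))
        Filter.atTop (nhds 0)) :
    Filter.Tendsto (fun n => RA n / rhoMA n (p n) σ2 (θ n)) Filter.atTop (nhds 1) := by
  obtain ⟨c, hc, hcev⟩ := hmax
  refine tendsto_div_of_le_of_le_add (e := fun n => d n 1 * σ2 / n) hz ?_ ?_
  · convert hd1.const_mul σ2 using 2 <;> ring
  filter_upwards [hcev, eventually_gt_atTop 0,
    hz.eventually (eventually_ge_nhds (by norm_num : (-1 : ℝ) < 0))] with n ⟨j, hj, hcj⟩ hn hzn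
  have hP : 1 ≤ p n := (mem_Icc.mp hj).1.trans (mem_Icc.mp hj).2
  refine ⟨rhoMA_pos hσ hn hj (abs_pos.mp (hc.trans_le hcj)), ?_, ?_⟩
  · exact hRA n ▸ rhoMA_le_sInf_nestedRisk hσ.le hP
  · rw [hRA n]
    refine (sInf_nestedRisk_le_of_weakOrdering hσ hn hP (hamono n) (haperm n) (hd0 n) (hdD n)
      (hdmono n) (hdratio n) (hblock n) (by linarith)).trans ?_
    gcongr
    · linarith
    · exact sum_oracleRisk_le_rhoMA hσ hn

/-- first part of Theorem 5 of the paper.  Under the weak-ordering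
condition on the coefficients, the optimal nested MA risk `R_n^{A}*` is asymptotically
equivalent to the ideal all-subset MA risk `ρ_n^{MA}`, provided `d_1 = o(n ρ_n^{MA})`. -/
theorem stmt_11 (σ2 : ℝ) (hσ : 0 < σ2)
    (p : ℕ → ℕ) (hp : ∀ n, p n ≤ n)
    (hpinf : Filter.Tendsto p Filter.atTop Filter.atTop)
    (θ : ℕ → ℕ → ℝ)
    (hbdd : ∃ B : ℝ, ∀ n, ∑ j ∈ Finset.Icc 1 (p n), θ n j ^ 2 ≤ B)
    (hmax : ∃ c : ℝ, 0 < c ∧ ∀ᶠ n in Filter.atTop, ∃ j ∈ Finset.Icc 1 (p n), c ≤ |θ n j|)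
    (a : ℕ → ℕ → ℝ)
    (hamono : ∀ n, ∀ j, 1 ≤ j → j < p n → a n (j + 1) ≤ a n j)
    (hanonneg : ∀ n, ∀ j, 1 ≤ j → j ≤ p n → 0 ≤ a n j)
    (haperm : ∀ n, ((Finset.Icc 1 (p n)).val.map fun j => |θ n j|)
        = ((Finset.Icc 1 (p n)).val.map fun j => a n j))
    (D : ℕ → ℕ) (d : ℕ → ℕ → ℕ) (z : ℕ → ℝ)
    (hz : Filter.Tendsto z Filter.atTop (nhds 0))
    (hd0 : ∀ n, d n 0 = 0) (hdD : ∀ n, d n (D n) = p n)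
    (hdmono : ∀ n, ∀ l, l < D n → d n l < d n (l + 1))
    (hdratio : ∀ n, ∀ l, 1 ≤ l → l ≤ D n - 1 →
        ((d n (l + 1) : ℝ) - (d n l : ℝ)) ≤ (1 + z n) * ((d n l : ℝ) - (d n (l - 1) : ℝ)))
    (hblock : ∀ n, ∀ l, 1 ≤ l → l ≤ D n →
        ((Finset.Icc (d n (l - 1) + 1) (d n l)).val.map fun j => |θ n j|)
          = ((Finset.Icc (d n (l - 1) + 1) (d n l)).val.map fun j => a n j))
    (RA : ℕ → ℝ)
    (hRA : ∀ n, RA n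
        = sInf {r : ℝ | ∃ w, InSimplex (p n) w ∧ r = nestedRisk n (p n) (p n) σ2 (θ n) w})
    (hd1 : Filter.Tendsto (fun n => (d n 1 : ℝ) / ((n : ℝ) * rhoMA n (p n) σ2 (θ n)))
        Filter.atTop (nhds 0)) :
    Filter.Tendsto (fun n => RA n / rhoMA n (p n) σ2 (θ n)) Filter.atTop (nhds 1) :=
  stmt_11_general σ2 hσ p θ hmax a hamono haperm D d z hz hd0 hdD hdmono hdratio hblock RA hRA hd1
end

section
/- Let σ² > 0, c > 0 and q > 1/2. For every n ∈ ℕ, inf_{γ ∈ ℝⁿ} sup { Σ_{j=1}^{n} [(1 − γ_j)² θ_j² + σ² γ_j²/n] : θ ∈ ℝⁿ with |θ_j| ≤ c j^{−q} for all j } = Σ_{j=1}^{n} c² j^{−2q} σ² / (n c² j^{−2q} + σ²); moreover, as n → ∞ with c, q, σ² fixed, this quantity ≍ n^{−1+1/(2q)}. -/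
open Finset Real

-- `v` stands for the per-coordinate noise variance `σ² / n`.
def linearRisk (s : Finset ℕ) (v : ℝ) (γ θ : ℕ → ℝ) : ℝ :=
  ∑ j ∈ s, ((1 - γ j) ^ 2 * θ j ^ 2 + v * γ j ^ 2)

-- `(a + b) ((1 - g)² a + b g²) - a b = ((a + b) g - a)²`
theorem mul_div_add_le_one_sub_sq_mul_add_mul_sq {a b : ℝ} (hab : 0 < a + b) (g : ℝ) :
    a * b / (a + b) ≤ (1 - g) ^ 2 * a + b * g ^ 2 := by
  rw [div_le_iff₀ hab]
  nlinarith [sq_nonneg ((a + b) * g - a)]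

theorem one_sub_sq_mul_add_mul_sq_eq_div_add {a b : ℝ} (hab : 0 < a + b) :
    (1 - a / (a + b)) ^ 2 * a + b * (a / (a + b)) ^ 2 = a * b / (a + b) := by
  field_simp
  ring

section LinearRisk
variable {s : Finset ℕ} {v : ℝ} {b : ℕ → ℝ}

theorem isGreatest_linearRisk (hb : ∀ j ∈ s, 0 ≤ b j) (γ : ℕ → ℝ) :
    IsGreatest {r | ∃ θ : ℕ → ℝ, (∀ j ∈ s, |θ j| ≤ b j) ∧ r = linearRisk s v γ θ}
      (linearRisk s v γ b) := by
  refine ⟨⟨b, fun j hj => (abs_of_nonneg (hb j hj)).le, rfl⟩, ?_⟩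
  rintro r ⟨θ, hθ, rfl⟩
  refine sum_le_sum fun j hj => ?_
  have : θ j ^ 2 ≤ b j ^ 2 := sq_le_sq.2 ((hθ j hj).trans (le_abs_self _))
  gcongr

theorem isLeast_linearRisk (hb : ∀ j ∈ s, 0 < b j ^ 2 + v) :
    IsLeast {r | ∃ γ, r = linearRisk s v γ b} (∑ j ∈ s, b j ^ 2 * v / (b j ^ 2 + v)) := by
  refine ⟨⟨fun j => b j ^ 2 / (b j ^ 2 + v), sum_congr rfl fun j hj => ?_⟩, ?_⟩
  · exact (one_sub_sq_mul_add_mul_sq_eq_div_add (hb j hj)).symm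
  · rintro r ⟨γ, rfl⟩
    exact sum_le_sum fun j hj => mul_div_add_le_one_sub_sq_mul_add_mul_sq (hb j hj) (γ j)

theorem sInf_sSup_linearRisk (hb : ∀ j ∈ s, 0 < b j) (hv : 0 ≤ v) :
    sInf {r | ∃ γ, r = sSup {t | ∃ θ : ℕ → ℝ, (∀ j ∈ s, |θ j| ≤ b j) ∧ t = linearRisk s v γ θ}}
      = ∑ j ∈ s, b j ^ 2 * v / (b j ^ 2 + v) := by
  simp_rw [fun γ => (isGreatest_linearRisk (v := v) (fun j hj => (hb j hj).le) γ).csSup_eq]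
  exact (isLeast_linearRisk fun j hj => by have := hb j hj; positivity).csInf_eq

end LinearRisk

theorem linearMinimaxRisk_hyperrectangle (σ2 c q : ℝ) (hσ : 0 ≤ σ2) (hc : 0 < c) (n : ℕ) :
    sInf {r : ℝ | ∃ γ : ℕ → ℝ,
        r = sSup {s : ℝ | ∃ θ : ℕ → ℝ,
            (∀ j ∈ Finset.Icc 1 n, |θ j| ≤ c * (j : ℝ) ^ (-q)) ∧
            s = ∑ j ∈ Finset.Icc 1 n,
                ((1 - γ j) ^ 2 * θ j ^ 2 + σ2 * γ j ^ 2 / n)}}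
      = ∑ j ∈ Finset.Icc 1 n,
          c ^ 2 * (j : ℝ) ^ (-(2 * q)) * σ2 / (n * (c ^ 2 * (j : ℝ) ^ (-(2 * q))) + σ2) := by
  have hpos : ∀ j ∈ Icc 1 n, (0 : ℝ) < j := fun j hj => by
    exact_mod_cast (mem_Icc.mp hj).1
  simp_rw [mul_div_right_comm σ2, ← linearRisk.eq_1]
  rw [sInf_sSup_linearRisk (fun j hj => by have := hpos j hj; positivity) (by positivity)]
  refine sum_congr rfl fun j hj => ?_
  have hn : (0 : ℝ) < n := (hpos j hj).trans_le (by exact_mod_cast (mem_Icc.mp hj).2)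
  rw [mul_pow, ← rpow_mul_natCast (hpos j hj).le,
    show -q * (2 : ℕ) = -(2 * q) by push_cast; ring]
  field_simp

theorem sum_Ioc_rpow_neg_le {p : ℝ} (hp : 1 < p) {K n : ℕ} (hK : 1 ≤ K) (hKn : K ≤ n) :
    ∑ j ∈ Ioc K n, (j : ℝ) ^ (-p) ≤ (K : ℝ) ^ (1 - p) / (p - 1) := by
  have hK0 : (0 : ℝ) < K := by exact_mod_cast hK
  have anti : AntitoneOn (fun x : ℝ => x ^ (-p)) (Set.Icc K n) := fun x hx y _ hxy =>
    rpow_le_rpow_of_nonpos (hK0.trans_le hx.1) hxy (by linarith)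
  have hKn' : (K : ℝ) ≤ n := by exact_mod_cast hKn
  calc ∑ j ∈ Ioc K n, (j : ℝ) ^ (-p) = ∑ i ∈ Ico K n, ((i + 1 : ℕ) : ℝ) ^ (-p) := by
        rw [sum_Ico_add' (fun j : ℕ => (j : ℝ) ^ (-p)), ← Finset.Ico_succ_succ_eq_Ioc]; rfl
    _ ≤ ∫ x in (K : ℝ)..n, x ^ (-p) := anti.sum_le_integral_Ico hKn
    _ = ((K : ℝ) ^ (1 - p) - (n : ℝ) ^ (1 - p)) / (p - 1) := by
        rw [integral_rpow (Or.inr ⟨by linarith, Set.notMem_uIcc_of_lt hK0 (hK0.trans_le hKn')⟩)]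
        rw [show -p + 1 = 1 - p by ring, ← neg_div_neg_eq, neg_sub, neg_sub]
    _ ≤ (K : ℝ) ^ (1 - p) / (p - 1) := by
        gcongr
        exact sub_le_self _ (by positivity)

theorem rpow_neg_mul_div_add_eq (A B x : ℝ) {p j : ℝ} (hj : 0 < j) :
    A * j ^ (-p) * B / (x * (A * j ^ (-p)) + B) = A * B / (x * A + B * j ^ p) := by
  have : 0 < j ^ p := rpow_pos_of_pos hj p
  rw [rpow_neg hj.le, ← mul_div_mul_right _ _ this.ne']
  congr 1 <;> field_simp

section Rate
variable {A B p : ℝ}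

theorem rpow_one_div_div_self {x : ℝ} (hx : 0 < x) (p : ℝ) :
    x ^ (1 / p) / x = x ^ (-1 + 1 / p) := by
  rw [rpow_add hx, rpow_neg_one, div_eq_mul_inv, mul_comm]

theorem rpow_one_div_rpow_one_sub {x : ℝ} (hx : 0 ≤ x) (hp : p ≠ 0) :
    (x ^ (1 / p)) ^ (1 - p) = x ^ (-1 + 1 / p) := by
  rw [← rpow_mul hx]
  congr 1
  field_simp
  ring

theorem rpow_one_div_rpow {x : ℝ} (hx : 0 ≤ x) (hp : p ≠ 0) : (x ^ (1 / p)) ^ p = x := by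
  rw [← rpow_mul hx, one_div_mul_cancel hp, rpow_one]

theorem le_sum_div_add_rpow (hA : 0 < A) (hB : 0 < B) (hp : 1 ≤ p) {n : ℕ} (hn : 1 ≤ n) :
    A * B / (2 * (A + B)) * (n : ℝ) ^ (-1 + 1 / p) ≤
      ∑ j ∈ Icc 1 n, A * B / (n * A + B * (j : ℝ) ^ p) := by
  have hx : (1 : ℝ) ≤ n := by exact_mod_cast hn
  set t := (n : ℝ) ^ (1 / p)
  have ht : 1 ≤ t := one_le_rpow hx (by positivity)
  set m := ⌊t⌋₊
  have hm1 : 1 ≤ m := (Nat.one_le_floor_iff t).2 ht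
  have htm : t < 2 * m := by
    have : (1 : ℝ) ≤ m := by exact_mod_cast hm1
    linarith [Nat.lt_floor_add_one t]
  have hmn : m ≤ n :=
    Nat.floor_le_of_le (rpow_le_self_of_one_le hx ((div_le_one (by linarith)).2 hp))
  have htn : t / n = (n : ℝ) ^ (-1 + 1 / p) := rpow_one_div_div_self (by positivity) p
  have hterm : ∀ j ∈ Icc 1 m, A * B / (n * (A + B)) ≤ A * B / (n * A + B * (j : ℝ) ^ p) := by
    intro j hj
    have hjp : (j : ℝ) ^ p ≤ n := calc
      (j : ℝ) ^ p ≤ t ^ p :=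
        rpow_le_rpow (by positivity) ((Nat.le_floor_iff (by positivity)).1 (mem_Icc.1 hj).2)
          (by linarith)
      _ = n := rpow_one_div_rpow (by positivity) (by linarith)
    gcongr
    nlinarith
  calc A * B / (2 * (A + B)) * (n : ℝ) ^ (-1 + 1 / p)
      = t / 2 * (A * B / (n * (A + B))) := by
        rw [← htn]
        field_simp
    _ ≤ m * (A * B / (n * (A + B))) := by gcongr; linarith
    _ = ∑ j ∈ Icc 1 m, A * B / (n * (A + B)) := by simp
    _ ≤ ∑ j ∈ Icc 1 m, A * B / (n * A + B * (j : ℝ) ^ p) := sum_le_sum hterm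
    _ ≤ ∑ j ∈ Icc 1 n, A * B / (n * A + B * (j : ℝ) ^ p) :=
        sum_le_sum_of_subset_of_nonneg (Icc_subset_Icc_right hmn) fun _ _ _ => by positivity

theorem sum_div_add_rpow_le (hA : 0 < A) (hB : 0 < B) (hp : 1 < p) {n : ℕ} (hn : 1 ≤ n) :
    ∑ j ∈ Icc 1 n, A * B / (n * A + B * (j : ℝ) ^ p) ≤
      (2 * B + A / (p - 1)) * (n : ℝ) ^ (-1 + 1 / p) := by
  have hx : (1 : ℝ) ≤ n := by exact_mod_cast hn
  set t := (n : ℝ) ^ (1 / p)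
  have ht : 1 ≤ t := one_le_rpow hx (by positivity)
  set K := ⌈t⌉₊
  have hK1 : 1 ≤ K := Nat.one_le_ceil_iff.2 (by linarith)
  have htK : t ≤ K := Nat.le_ceil t
  have hKt : (K : ℝ) ≤ 2 * t := by linarith [Nat.ceil_lt_add_one (by linarith : 0 ≤ t)]
  have hKn : K ≤ n :=
    Nat.ceil_le.2 (rpow_le_self_of_one_le hx ((div_le_one (by linarith)).2 hp.le))
  have head : ∀ j ∈ Ioc 0 K, A * B / (n * A + B * (j : ℝ) ^ p) ≤ B / n := fun j _ => by
    calc A * B / (n * A + B * (j : ℝ) ^ p) ≤ A * B / (n * A) := by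
          gcongr
          exact le_add_of_nonneg_right (by positivity)
      _ = B / n := by field_simp
  have tail : ∀ j ∈ Ioc K n, A * B / (n * A + B * (j : ℝ) ^ p) ≤ A * (j : ℝ) ^ (-p) := by
    intro j hj
    have : (0 : ℝ) < j := Nat.cast_pos.2 (Nat.zero_lt_of_lt (mem_Ioc.1 hj).1)
    calc A * B / (n * A + B * (j : ℝ) ^ p) ≤ A * B / (B * (j : ℝ) ^ p) := by
          gcongr
          exact le_add_of_nonneg_left (by positivity)
      _ = A * (j : ℝ) ^ (-p) := by rw [rpow_neg this.le]; field_simp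
  rw [show Icc 1 n = Ioc 0 n from Icc_add_one_left_eq_Ioc 0 n,
    ← sum_Ioc_consecutive _ (Nat.zero_le K) hKn]
  calc _ ≤ K * (B / n) + A * ((K : ℝ) ^ (1 - p) / (p - 1)) := by
        gcongr
        · simpa using sum_le_card_nsmul _ _ _ head
        · refine (sum_le_sum tail).trans ?_
          rw [← mul_sum]
          gcongr
          exact sum_Ioc_rpow_neg_le hp hK1 hKn
    _ ≤ 2 * t * (B / n) + A * (t ^ (1 - p) / (p - 1)) := by
        have : (K : ℝ) ^ (1 - p) ≤ t ^ (1 - p) :=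
          rpow_le_rpow_of_nonpos (by linarith) htK (by linarith)
        gcongr
    _ = (2 * B + A / (p - 1)) * (n : ℝ) ^ (-1 + 1 / p) := by
        rw [rpow_one_div_rpow_one_sub (by positivity) (by linarith),
          ← rpow_one_div_div_self (by positivity)]
        ring

theorem asympEquiv_sum_rpow_neg (hA : 0 < A) (hB : 0 < B) (hp : 1 < p) :
    AsympEquiv
      (fun n : ℕ => ∑ j ∈ Icc 1 n, A * (j : ℝ) ^ (-p) * B / (n * (A * (j : ℝ) ^ (-p)) + B))
      (fun n => (n : ℝ) ^ ((-1 : ℝ) + 1 / p)) := by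
  refine ⟨A * B / (2 * (A + B)), 2 * B + A / (p - 1), by positivity, ?_, ?_⟩
  · have : A * B / (2 * (A + B)) ≤ B := by
      rw [div_le_iff₀ (by positivity)]
      nlinarith
    have : 0 ≤ A / (p - 1) := div_nonneg hA.le (by linarith)
    linarith
  · filter_upwards [Filter.eventually_ge_atTop 1] with n hn
    have hsum : ∑ j ∈ Icc 1 n, A * (j : ℝ) ^ (-p) * B / (n * (A * (j : ℝ) ^ (-p)) + B) =
        ∑ j ∈ Icc 1 n, A * B / (n * A + B * (j : ℝ) ^ p) :=
      sum_congr rfl fun j hj =>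
        rpow_neg_mul_div_add_eq _ _ _ (by exact_mod_cast (mem_Icc.1 hj).1)
    rw [hsum]
    exact ⟨le_sum_div_add_rpow hA hB hp.le hn, sum_div_add_rpow_le hA hB hp hn⟩

end Rate

/-- linear minimax risk over a hyperrectangle, equation (D.9) of the paper.
For every `n`, the minimax risk over all linear (shrinkage) rules `γ ∈ ℝⁿ` against the
hyperrectangle `Θ^H(c,q) = {θ : |θ_j| ≤ c j^{−q}}` equals
`∑_{j=1}^{n} c² j^{−2q} σ² / (n c² j^{−2q} + σ²)`; moreover this quantity is
`≍ n^{−1+1/(2q)}` as `n → ∞`. -/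
theorem stmt_13 (σ2 c q : ℝ) (hσ : 0 < σ2) (hc : 0 < c) (hq : 1 / 2 < q) :
    (∀ n : ℕ,
      sInf {r : ℝ | ∃ γ : ℕ → ℝ,
          r = sSup {s : ℝ | ∃ θ : ℕ → ℝ,
              (∀ j ∈ Finset.Icc 1 n, |θ j| ≤ c * (j : ℝ) ^ (-q)) ∧
              s = ∑ j ∈ Finset.Icc 1 n,
                  ((1 - γ j) ^ 2 * θ j ^ 2 + σ2 * γ j ^ 2 / n)}}
        = ∑ j ∈ Finset.Icc 1 n,
            c ^ 2 * (j : ℝ) ^ (-(2 * q)) * σ2 / (n * (c ^ 2 * (j : ℝ) ^ (-(2 * q))) + σ2))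
    ∧ AsympEquiv
        (fun n => ∑ j ∈ Finset.Icc 1 n,
            c ^ 2 * (j : ℝ) ^ (-(2 * q)) * σ2 / (n * (c ^ 2 * (j : ℝ) ^ (-(2 * q))) + σ2))
        (fun n => (n : ℝ) ^ ((-1 : ℝ) + 1 / (2 * q))) :=
  ⟨linearMinimaxRisk_hyperrectangle σ2 c q hσ.le hc,
    asympEquiv_sum_rpow_neg (by positivity) hσ (by linarith)⟩
end
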